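/- arXiv:2509.06549 — 8 statements merged into one kernel-verified Lean document; each statement's English description precedes it below -/
import Mathlib

section
/- For every ρ > 0 it holds that 2^{ρ·H_{1/(1+ρ)}(D)} / (1 + log₂ N)^ρ ≤ ∑_{i=1}^{N} i^ρ · p_i ≤ 2^{ρ·H_{1/(1+ρ)}(D)}. -/
/-!
Write `α = 1/(1+ρ)`, `S = ∑ pᵢ^α`, so that `2^(ρ·H_α) = S^(1+ρ)`.
Upper bound: since the `pᵢ` decrease, `i · pᵢ^α ≤ p₁^α + ⋯ + pᵢ^α ≤ S`, hence
`i^ρ pᵢ = (i pᵢ^α)^ρ pᵢ^α ≤ S^ρ pᵢ^α`; summing gives `S^(1+ρ)`.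
Lower bound: the weighted Hölder inequality with weights `1/i` and exponent `1+ρ`, applied to
`pᵢ^α = (1/i) · (i pᵢ^α)`, gives `S^(1+ρ) ≤ (∑ i^ρ pᵢ) · (∑ 1/i)^ρ`, and the harmonic sum is
at most `1 + ln N ≤ 1 + log₂ N`.
-/

open Finset Real

lemma two_rpow_mul_renyi_exponent {S ρ : ℝ} (hS : 0 < S) (hρ : 0 < ρ) :
    (2 : ℝ) ^ (ρ * ((1 / (1 - 1 / (1 + ρ))) * logb 2 S)) = S ^ (1 + ρ) := by
  have hexp : ρ * ((1 / (1 - 1 / (1 + ρ))) * logb 2 S) = logb 2 S * (1 + ρ) := by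
    have : ρ ≠ 0 := hρ.ne'
    field_simp
    rw [add_sub_cancel_left]
    field_simp
  rw [hexp, rpow_mul zero_le_two, rpow_logb zero_lt_two (by norm_num) hS]

lemma Antitone.succ_mul_le_sum {n : ℕ} {f : Fin n → ℝ} (hf : Antitone f) (h0 : ∀ i, 0 ≤ f i)
    (i : Fin n) : ((i : ℝ) + 1) * f i ≤ ∑ j, f j :=
  calc ((i : ℝ) + 1) * f i = #(Iic i) • f i := by
        rw [Fin.card_Iic, nsmul_eq_mul]
        push_cast
        ring
    _ ≤ ∑ j ∈ Iic i, f j := card_nsmul_le_sum _ _ _ fun j hj => hf (mem_Iic.mp hj)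
    _ ≤ ∑ j, f j := sum_le_sum_of_subset_of_nonneg (subset_univ _) fun j _ _ => h0 j

lemma Antitone.sum_succ_rpow_mul_le {n : ℕ} {q : Fin n → ℝ} (hq : Antitone q)
    (h0 : ∀ i, 0 ≤ q i) {ρ : ℝ} (hρ : 0 ≤ ρ) :
    ∑ i : Fin n, ((i : ℝ) + 1) ^ ρ * q i ≤ (∑ i, q i ^ (1 / (1 + ρ))) ^ (1 + ρ) := by
  set α := 1 / (1 + ρ)
  set S := ∑ i, q i ^ α
  have hα : α * ρ + α = 1 := by
    simp only [α]
    field_simp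
    ring
  have hqα : ∀ i, 0 ≤ q i ^ α := fun i => rpow_nonneg (h0 i) α
  have hqα_anti : Antitone fun i => q i ^ α := fun i j hij =>
    rpow_le_rpow (h0 j) (hq hij) (by positivity)
  have hterm (i : Fin n) : ((i : ℝ) + 1) ^ ρ * q i ≤ S ^ ρ * q i ^ α :=
    calc ((i : ℝ) + 1) ^ ρ * q i = (((i : ℝ) + 1) * q i ^ α) ^ ρ * q i ^ α := by
          rw [mul_rpow (by positivity) (hqα i), ← rpow_mul (h0 i), mul_assoc,
            ← rpow_add' (h0 i) (by rw [hα]; exact one_ne_zero), hα, rpow_one]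
      _ ≤ S ^ ρ * q i ^ α :=
          mul_le_mul_of_nonneg_right (rpow_le_rpow (mul_nonneg (by positivity) (hqα i))
            (hqα_anti.succ_mul_le_sum hqα i) hρ) (hqα i)
  calc ∑ i : Fin n, ((i : ℝ) + 1) ^ ρ * q i
      ≤ ∑ i, S ^ ρ * q i ^ α := sum_le_sum fun i _ => hterm i
    _ = S ^ (1 + ρ) := by
        rw [← mul_sum, rpow_add' (sum_nonneg fun i _ => hqα i) (by positivity), rpow_one,
          mul_comm]

lemma rpow_sum_rpow_le_mul_rpow_sum_inv {ι : Type*} (s : Finset ι) {ρ : ℝ} (hρ : 0 ≤ ρ)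
    {w q : ι → ℝ} (hw : ∀ i, 0 < w i) (hq : ∀ i, 0 ≤ q i) :
    (∑ i ∈ s, q i ^ (1 / (1 + ρ))) ^ (1 + ρ) ≤
      (∑ i ∈ s, w i ^ ρ * q i) * (∑ i ∈ s, (w i)⁻¹) ^ ρ := by
  have h1ρ : (0 : ℝ) < 1 + ρ := by linarith
  have hholder := inner_le_weight_mul_Lp_of_nonneg s (le_add_of_nonneg_right hρ)
    (fun i => (w i)⁻¹) (fun i => q i ^ (1 / (1 + ρ)) * w i)
    (fun i => (inv_pos.mpr (hw i)).le) (fun i => mul_nonneg (rpow_nonneg (hq i) _) (hw i).le)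
  have hleft (i : ι) : (w i)⁻¹ * (q i ^ (1 / (1 + ρ)) * w i) = q i ^ (1 / (1 + ρ)) := by
    field_simp [(hw i).ne']
  have hright (i : ι) :
      (w i)⁻¹ * (q i ^ (1 / (1 + ρ)) * w i) ^ (1 + ρ) = w i ^ ρ * q i := by
    rw [mul_rpow (rpow_nonneg (hq i) _) (hw i).le, ← rpow_mul (hq i),
      one_div_mul_cancel h1ρ.ne', rpow_one, rpow_add (hw i), rpow_one]
    field_simp [(hw i).ne']
  simp only [hleft, hright] at hholder
  calc (∑ i ∈ s, q i ^ (1 / (1 + ρ))) ^ (1 + ρ)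
      ≤ ((∑ i ∈ s, (w i)⁻¹) ^ (1 - (1 + ρ)⁻¹) *
          (∑ i ∈ s, w i ^ ρ * q i) ^ (1 + ρ)⁻¹) ^ (1 + ρ) := by
        gcongr
        exact sum_nonneg fun i _ => rpow_nonneg (hq i) _
    _ = (∑ i ∈ s, w i ^ ρ * q i) * (∑ i ∈ s, (w i)⁻¹) ^ ρ := by
        have hW : 0 ≤ ∑ i ∈ s, (w i)⁻¹ := sum_nonneg fun i _ => (inv_pos.mpr (hw i)).le
        have hT : 0 ≤ ∑ i ∈ s, w i ^ ρ * q i :=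
          sum_nonneg fun i _ => mul_nonneg (rpow_nonneg (hw i).le _) (hq i)
        rw [mul_rpow (rpow_nonneg hW _) (rpow_nonneg hT _), ← rpow_mul hW, ← rpow_mul hT,
          inv_mul_cancel₀ h1ρ.ne', rpow_one, mul_comm]
        congr 2
        field_simp
        ring

lemma sum_fin_inv_succ_le_one_add_logb (n : ℕ) :
    ∑ i : Fin n, ((i : ℝ) + 1)⁻¹ ≤ 1 + logb 2 n := by
  have hharmonic : ∑ i : Fin n, ((i : ℝ) + 1)⁻¹ = harmonic n := by
    rw [harmonic]
    push_cast
    exact (sum_range fun i => ((i : ℝ) + 1)⁻¹).symm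
  have hlog : log n ≤ logb 2 n :=
    le_div_self (log_natCast_nonneg n) (log_pos one_lt_two)
      (log_two_lt_d9.le.trans (by norm_num))
  linarith [harmonic_le_one_add_log n]

theorem arikan_inequality_general {K : Type*} [Fintype K] [Nonempty K]
    (P : K → ℝ) (hpos : ∀ x, 0 < P x)
    (e : Fin (Fintype.card K) ≃ K)
    (hsort : ∀ i j : Fin (Fintype.card K), i ≤ j → P (e j) ≤ P (e i))
    (ρ : ℝ) (hρ : 0 < ρ) :
    (2 : ℝ) ^ (ρ * ((1 / (1 - 1 / (1 + ρ))) * Real.logb 2 (∑ x, P x ^ (1 / (1 + ρ))))) /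
        (1 + Real.logb 2 (Fintype.card K)) ^ ρ ≤
      ∑ i : Fin (Fintype.card K), ((i : ℝ) + 1) ^ ρ * P (e i) ∧
    ∑ i : Fin (Fintype.card K), ((i : ℝ) + 1) ^ ρ * P (e i) ≤
      (2 : ℝ) ^ (ρ * ((1 / (1 - 1 / (1 + ρ))) * Real.logb 2 (∑ x, P x ^ (1 / (1 + ρ))))) := by
  have hS : 0 < ∑ x, P x ^ (1 / (1 + ρ)) :=
    sum_pos (fun x _ => rpow_pos_of_pos (hpos x) _) univ_nonempty
  have hreindex : ∑ x, P x ^ (1 / (1 + ρ)) = ∑ i, P (e i) ^ (1 / (1 + ρ)) :=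
    (e.sum_comp fun x => P x ^ (1 / (1 + ρ))).symm
  rw [two_rpow_mul_renyi_exponent hS hρ, hreindex]
  have hpos' : ∀ i, 0 ≤ P (e i) := fun i => (hpos (e i)).le
  refine ⟨?_, Antitone.sum_succ_rpow_mul_le hsort hpos' hρ.le⟩
  have hlogb : 0 ≤ logb 2 (Fintype.card K) :=
    logb_nonneg one_lt_two (by exact_mod_cast Fintype.card_pos)
  rw [div_le_iff₀ (rpow_pos_of_pos (by linarith) ρ)]
  calc (∑ i, P (e i) ^ (1 / (1 + ρ))) ^ (1 + ρ)
      ≤ (∑ i : Fin (Fintype.card K), ((i : ℝ) + 1) ^ ρ * P (e i)) *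
          (∑ i : Fin (Fintype.card K), ((i : ℝ) + 1)⁻¹) ^ ρ :=
        rpow_sum_rpow_le_mul_rpow_sum_inv univ hρ.le (fun i => Nat.cast_add_one_pos i) hpos'
    _ ≤ _ := by
        gcongr
        · exact sum_nonneg fun i _ => mul_nonneg (by positivity) (hpos' i)
        · exact sum_fin_inv_succ_le_one_add_logb _

/-- **Arikan's Inequality.** Let `D` be a probability distribution on a finite nonempty
set `K` with pmf `P : K → (0,1]` summing to `1`, and let `e` enumerate the keys in
decreasing order of probability (so `p_i = P (e i)` are the sorted values). For every
`ρ > 0`: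
`2^(ρ·H_{1/(1+ρ)}(D)) / (1 + log₂ |K|)^ρ ≤ ∑ i, i^ρ · p_i ≤ 2^(ρ·H_{1/(1+ρ)}(D))`,
where `H_α(D) = (1/(1-α))·log₂(∑_x P(x)^α)`. -/
theorem arikan_inequality {K : Type*} [Fintype K] [Nonempty K]
    (P : K → ℝ) (hpos : ∀ x, 0 < P x) (hle : ∀ x, P x ≤ 1)
    (hsum : ∑ x, P x = 1)
    (e : Fin (Fintype.card K) ≃ K)
    (hsort : ∀ i j : Fin (Fintype.card K), i ≤ j → P (e j) ≤ P (e i))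
    (ρ : ℝ) (hρ : 0 < ρ) :
    (2 : ℝ) ^ (ρ * ((1 / (1 - 1 / (1 + ρ))) * Real.logb 2 (∑ x, P x ^ (1 / (1 + ρ))))) /
        (1 + Real.logb 2 (Fintype.card K)) ^ ρ ≤
      ∑ i : Fin (Fintype.card K), ((i : ℝ) + 1) ^ ρ * P (e i) ∧
    ∑ i : Fin (Fintype.card K), ((i : ℝ) + 1) ^ ρ * P (e i) ≤
      (2 : ℝ) ^ (ρ * ((1 / (1 - 1 / (1 + ρ))) * Real.logb 2 (∑ x, P x ^ (1 / (1 + ρ))))) :=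
  arikan_inequality_general P hpos e hsort ρ hρ
end

section
/- The expected number of guesses of the algorithm that queries keys in decreasing order of probability until it finds a key drawn from D, namely E[T] = ∑_{i=1}^{N} i · p_i, satisfies 2^{H_{1/2}(D)} / (1 + log₂ N) ≤ ∑_{i=1}^{N} i · p_i ≤ 2^{H_{1/2}(D)}. -/
/-!
Write `aᵢ = √pᵢ`, so that `2^{H_{1/2}} = (∑ aᵢ)²`. For the upper bound, since the `aᵢ` decrease,
`(i+1)·aᵢ ≤ a₀ + ⋯ + aᵢ ≤ ∑ a`, hence `(i+1)·pᵢ ≤ (∑ a)·aᵢ`, and summing over `i` gives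
`∑ (i+1)·pᵢ ≤ (∑ a)²`. For the lower bound, Cauchy–Schwarz applied to `aᵢ = √((i+1)pᵢ)·√(1/(i+1))`
gives `(∑ a)² ≤ (∑ (i+1)·pᵢ)·Hₙ`, and the harmonic number satisfies `Hₙ ≤ 1 + ln n ≤ 1 + log₂ n`.
-/

open Finset Real

lemma succ_mul_le_sum_of_antitone {n : ℕ} {a : Fin n → ℝ} (ha : 0 ≤ a) (hanti : Antitone a)
    (i : Fin n) : ((i : ℝ) + 1) * a i ≤ ∑ j, a j :=
  calc ((i : ℝ) + 1) * a i = ∑ _j ∈ Iic i, a i := by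
        rw [sum_const, Fin.card_Iic, nsmul_eq_mul]; push_cast; ring
    _ ≤ ∑ j ∈ Iic i, a j := sum_le_sum fun j hj => hanti (mem_Iic.1 hj)
    _ ≤ ∑ j, a j := sum_le_sum_of_subset_of_nonneg (subset_univ _) fun j _ _ => ha j

lemma sum_succ_mul_le_sq_sum_sqrt_of_antitone {n : ℕ} {p : Fin n → ℝ} (hp : 0 ≤ p)
    (hanti : Antitone p) : ∑ i : Fin n, ((i : ℝ) + 1) * p i ≤ (∑ i, √(p i)) ^ 2 := by
  have hsqrt : ∀ i : Fin n, ((i : ℝ) + 1) * √(p i) ≤ ∑ j, √(p j) :=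
    succ_mul_le_sum_of_antitone (fun i => sqrt_nonneg _) fun i j hij => sqrt_le_sqrt (hanti hij)
  calc ∑ i : Fin n, ((i : ℝ) + 1) * p i = ∑ i : Fin n, ((i : ℝ) + 1) * √(p i) * √(p i) := by
        simp_rw [mul_assoc, mul_self_sqrt (hp _)]
    _ ≤ ∑ i, (∑ j, √(p j)) * √(p i) :=
        sum_le_sum fun i _ => mul_le_mul_of_nonneg_right (hsqrt i) (sqrt_nonneg _)
    _ = (∑ i, √(p i)) ^ 2 := by rw [← mul_sum, sq]

lemma sum_fin_inv_succ_eq_harmonic (n : ℕ) : ∑ i : Fin n, ((i : ℝ) + 1)⁻¹ = harmonic n := by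
  rw [Fin.sum_univ_eq_sum_range (fun k => ((k : ℝ) + 1)⁻¹), harmonic]
  push_cast
  rfl

lemma sq_sum_sqrt_le_sum_succ_mul_mul_harmonic {n : ℕ} {p : Fin n → ℝ} (hp : 0 ≤ p) :
    (∑ i, √(p i)) ^ 2 ≤ (∑ i : Fin n, ((i : ℝ) + 1) * p i) * harmonic n := by
  rw [← sum_fin_inv_succ_eq_harmonic]
  refine sum_sq_le_sum_mul_sum_of_sq_le_mul _ (f := fun i : Fin n => ((i : ℝ) + 1) * p i)
    (g := fun i : Fin n => ((i : ℝ) + 1)⁻¹) (fun i _ => by have : 0 ≤ p i := hp i; positivity)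
    (fun i _ => by positivity) fun i _ => ?_
  rw [sq_sqrt (hp i)]
  field_simp
  rfl

lemma harmonic_le_one_add_logb_two (n : ℕ) : (harmonic n : ℝ) ≤ 1 + logb 2 n := by
  have hlog : log n ≤ logb 2 n :=
    le_div_self (log_natCast_nonneg n) (log_pos one_lt_two) (log_two_lt_d9.le.trans (by norm_num))
  linarith [harmonic_le_one_add_log n]

lemma two_rpow_two_mul_logb_two {x : ℝ} (hx : 0 < x) : (2 : ℝ) ^ (2 * logb 2 x) = x ^ 2 := by
  rw [mul_comm, rpow_mul zero_le_two, rpow_logb zero_lt_two one_lt_two.ne' hx, rpow_two]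

theorem classical_key_guessing_general {K : Type*} [Fintype K] [Nonempty K]
    (P : K → ℝ) (hpos : ∀ x, 0 < P x)
    (e : Fin (Fintype.card K) ≃ K)
    (hsort : ∀ i j : Fin (Fintype.card K), i ≤ j → P (e j) ≤ P (e i)) :
    (2 : ℝ) ^ (2 * Real.logb 2 (∑ x, P x ^ ((1 : ℝ) / 2))) /
        (1 + Real.logb 2 (Fintype.card K)) ≤
      ∑ i : Fin (Fintype.card K), ((i : ℝ) + 1) * P (e i) ∧
    ∑ i : Fin (Fintype.card K), ((i : ℝ) + 1) * P (e i) ≤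
      (2 : ℝ) ^ (2 * Real.logb 2 (∑ x, P x ^ ((1 : ℝ) / 2))) := by
  have hp : 0 ≤ P ∘ e := fun i => (hpos (e i)).le
  have hS : ∑ x, P x ^ ((1 : ℝ) / 2) = ∑ i, √(P (e i)) := by
    rw [← e.sum_comp]
    simp_rw [← sqrt_eq_rpow]
  have hSpos : 0 < ∑ i, √(P (e i)) :=
    sum_pos (fun i _ => sqrt_pos.2 (hpos _)) univ_nonempty
  rw [hS, two_rpow_two_mul_logb_two hSpos]
  refine ⟨?_, sum_succ_mul_le_sq_sum_sqrt_of_antitone hp hsort⟩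
  have hden : 0 < 1 + logb 2 (Fintype.card K) := by
    have := logb_nonneg one_lt_two (Nat.one_le_cast.2 (Fintype.card_pos (α := K))); linarith
  rw [div_le_iff₀ hden]
  calc (∑ i, √(P (e i))) ^ 2
      ≤ (∑ i : Fin (Fintype.card K), ((i : ℝ) + 1) * P (e i)) * harmonic (Fintype.card K) :=
        sq_sum_sqrt_le_sum_succ_mul_mul_harmonic hp
    _ ≤ _ := mul_le_mul_of_nonneg_left (harmonic_le_one_add_logb_two _)
        (sum_nonneg fun i _ => by have := hpos (e i); positivity)

/-- **Classical key guessing (Arikan, ρ = 1).** For a distribution on a finite nonempty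
set `K` with pmf `P` and keys enumerated in decreasing order of probability by `e`,
the expected number of guesses `E[T] = ∑ i, i · p_i` satisfies
`2^(H_{1/2}(D)) / (1 + log₂ |K|) ≤ ∑ i, i · p_i ≤ 2^(H_{1/2}(D))`,
where `H_{1/2}(D) = 2·log₂(∑_x P(x)^{1/2})`. -/
theorem classical_key_guessing {K : Type*} [Fintype K] [Nonempty K]
    (P : K → ℝ) (hpos : ∀ x, 0 < P x) (hle : ∀ x, P x ≤ 1)
    (hsum : ∑ x, P x = 1)
    (e : Fin (Fintype.card K) ≃ K)
    (hsort : ∀ i j : Fin (Fintype.card K), i ≤ j → P (e j) ≤ P (e i)) :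
    (2 : ℝ) ^ (2 * Real.logb 2 (∑ x, P x ^ ((1 : ℝ) / 2))) /
        (1 + Real.logb 2 (Fintype.card K)) ≤
      ∑ i : Fin (Fintype.card K), ((i : ℝ) + 1) * P (e i) ∧
    ∑ i : Fin (Fintype.card K), ((i : ℝ) + 1) * P (e i) ≤
      (2 : ℝ) ^ (2 * Real.logb 2 (∑ x, P x ^ ((1 : ℝ) / 2))) :=
  classical_key_guessing_general P hpos e hsort
end

section
/- Assume H_{1/2}(D) ≥ log₂(1 + log₂ N) and ∑_{i=1}^{N} √i · p_i > 1. Then the quantum speed-up s := log₂(∑_{i=1}^{N} i · p_i) / log₂(∑_{i=1}^{N} √i · p_i) satisfies s ≥ 2 · (H_{1/2}(D) − log₂(1 + log₂ N)) / H_{2/3}(D). -/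
set_option maxHeartbeats 1000000

/-- **Quantum speed-up of Montanaro's algorithm.** With `T_C = ∑ i, i·p_i` and
`T_Q = ∑ i, √i·p_i` (keys sorted in decreasing order of probability by `e`), if
`H_{1/2}(D) ≥ log₂(1 + log₂ |K|)` and `T_Q > 1`, then the quantum speed-up
`s = log₂ T_C / log₂ T_Q` satisfies
`s ≥ 2 · (H_{1/2}(D) − log₂(1 + log₂ |K|)) / H_{2/3}(D)`. -/
theorem quantum_speedup {K : Type*} [Fintype K] [Nonempty K]
    (P : K → ℝ) (hpos : ∀ x, 0 < P x) (hle : ∀ x, P x ≤ 1)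
    (hsum : ∑ x, P x = 1)
    (e : Fin (Fintype.card K) ≃ K)
    (hsort : ∀ i j : Fin (Fintype.card K), i ≤ j → P (e j) ≤ P (e i))
    (hH : 2 * Real.logb 2 (∑ x, P x ^ ((1 : ℝ) / 2)) ≥
      Real.logb 2 (1 + Real.logb 2 (Fintype.card K)))
    (hTQ : 1 < ∑ i : Fin (Fintype.card K), Real.sqrt ((i : ℝ) + 1) * P (e i)) :
    Real.logb 2 (∑ i : Fin (Fintype.card K), ((i : ℝ) + 1) * P (e i)) /
        Real.logb 2 (∑ i : Fin (Fintype.card K), Real.sqrt ((i : ℝ) + 1) * P (e i)) ≥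
      2 * (2 * Real.logb 2 (∑ x, P x ^ ((1 : ℝ) / 2)) -
            Real.logb 2 (1 + Real.logb 2 (Fintype.card K))) /
        (3 * Real.logb 2 (∑ x, P x ^ ((2 : ℝ) / 3))) := by
  have hN1 : 1 ≤ Fintype.card K := Fintype.card_pos
  have hN1R : (1:ℝ) ≤ (Fintype.card K : ℝ) := by exact_mod_cast hN1
  set A := ∑ x, P x ^ ((1:ℝ)/2) with hAdef
  set B := ∑ x, P x ^ ((2:ℝ)/3) with hBdef
  set TC := ∑ i : Fin (Fintype.card K), ((i:ℝ)+1) * P (e i) with hTCdef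
  set TQ := ∑ i : Fin (Fintype.card K), Real.sqrt ((i:ℝ)+1) * P (e i) with hTQdef
  have hApos : 0 < A :=
    Finset.sum_pos (fun x _ => Real.rpow_pos_of_pos (hpos x) _) Finset.univ_nonempty
  have hBpos : 0 < B :=
    Finset.sum_pos (fun x _ => Real.rpow_pos_of_pos (hpos x) _) Finset.univ_nonempty
  have hTQpos : (0:ℝ) < TQ := lt_trans one_pos hTQ
  -- harmonic sum bound
  have hharm : ∑ i : Fin (Fintype.card K), (1:ℝ)/((i:ℝ)+1)
      ≤ 1 + Real.logb 2 (Fintype.card K) := by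
    have h1 : ∑ i : Fin (Fintype.card K), (1:ℝ)/((i:ℝ)+1)
        = (harmonic (Fintype.card K) : ℝ) := by
      rw [Fin.sum_univ_eq_sum_range (fun i => (1:ℝ)/((i:ℝ)+1)) (Fintype.card K)]
      simp [harmonic, one_div]
    have h2 : (harmonic (Fintype.card K) : ℝ) ≤ 1 + Real.log (Fintype.card K) :=
      harmonic_le_one_add_log (Fintype.card K)
    have h3 : Real.log (Fintype.card K) ≤ Real.logb 2 (Fintype.card K) := by
      rw [Real.logb, le_div_iff₀ (Real.log_pos one_lt_two)]
      nlinarith [Real.log_nonneg hN1R, Real.log_two_lt_d9]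
    linarith
  have hLpos : (0:ℝ) < 1 + Real.logb 2 (Fintype.card K) := by
    have := Real.logb_nonneg one_lt_two hN1R
    linarith
  -- Cauchy–Schwarz (Arikan)
  have hAe : A = ∑ i : Fin (Fintype.card K), P (e i) ^ ((1:ℝ)/2) :=
    (Equiv.sum_comp e (fun x => P x ^ ((1:ℝ)/2))).symm
  have hCS : A^2 ≤ (1 + Real.logb 2 (Fintype.card K)) * TC := by
    have hcs := Finset.sum_mul_sq_le_sq_mul_sq Finset.univ
      (fun i : Fin (Fintype.card K) => Real.sqrt (1/((i:ℝ)+1)))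
      (fun i : Fin (Fintype.card K) => Real.sqrt (((i:ℝ)+1) * P (e i)))
    have hfg : ∀ i : Fin (Fintype.card K),
        Real.sqrt (1/((i:ℝ)+1)) * Real.sqrt (((i:ℝ)+1) * P (e i)) = P (e i) ^ ((1:ℝ)/2) := by
      intro i
      rw [← Real.sqrt_mul (by positivity), ← Real.sqrt_eq_rpow]
      congr 1
      field_simp
    have hf2 : ∀ i : Fin (Fintype.card K), Real.sqrt (1/((i:ℝ)+1)) ^ 2 = 1/((i:ℝ)+1) := by
      intro i
      apply Real.sq_sqrt
      positivity
    have hg2 : ∀ i : Fin (Fintype.card K),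
        Real.sqrt (((i:ℝ)+1) * P (e i)) ^ 2 = ((i:ℝ)+1) * P (e i) := by
      intro i
      apply Real.sq_sqrt
      have := (hpos (e i)).le
      positivity
    simp only [hfg, hf2, hg2] at hcs
    rw [← hAe] at hcs
    have hTCnn : (0:ℝ) ≤ TC := by
      apply Finset.sum_nonneg
      intro i _
      have := (hpos (e i)).le
      positivity
    calc A^2 ≤ (∑ i : Fin (Fintype.card K), (1:ℝ)/((i:ℝ)+1)) * TC := hcs
      _ ≤ (1 + Real.logb 2 (Fintype.card K)) * TC := mul_le_mul_of_nonneg_right hharm hTCnn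
  have hTCpos : (0:ℝ) < TC := by nlinarith
  have hx : 2 * Real.logb 2 A - Real.logb 2 (1 + Real.logb 2 (Fintype.card K))
      ≤ Real.logb 2 TC := by
    have hdivle : A^2 / (1 + Real.logb 2 (Fintype.card K)) ≤ TC := by
      rw [div_le_iff₀ hLpos]; linarith [hCS]
    have h := Real.logb_le_logb_of_le one_lt_two
      (show (0:ℝ) < A^2 / (1 + Real.logb 2 (Fintype.card K)) by positivity) hdivle
    rw [Real.logb_div (by positivity) (by positivity), Real.logb_pow] at h
    push_cast at h
    linarith
  -- quantum upper bound
  have hBe : B = ∑ i : Fin (Fintype.card K), P (e i) ^ ((2:ℝ)/3) :=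
    (Equiv.sum_comp e (fun x => P x ^ ((2:ℝ)/3))).symm
  have hkey : ∀ i : Fin (Fintype.card K), ((i:ℝ)+1) * P (e i) ^ ((2:ℝ)/3) ≤ B := by
    intro i
    rw [hBe]
    calc ((i:ℝ)+1) * P (e i) ^ ((2:ℝ)/3)
        = ∑ _j ∈ Finset.Iic i, P (e i) ^ ((2:ℝ)/3) := by
          rw [Finset.sum_const, Fin.card_Iic, nsmul_eq_mul]
          push_cast; ring
      _ ≤ ∑ j ∈ Finset.Iic i, P (e j) ^ ((2:ℝ)/3) :=
          Finset.sum_le_sum fun j hj =>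
            Real.rpow_le_rpow (hpos _).le (hsort j i (Finset.mem_Iic.mp hj)) (by norm_num)
      _ ≤ ∑ j : Fin (Fintype.card K), P (e j) ^ ((2:ℝ)/3) :=
          Finset.sum_le_sum_of_subset_of_nonneg (Finset.subset_univ _)
            fun j _ _ => (Real.rpow_pos_of_pos (hpos _) _).le
  have hterm : ∀ i : Fin (Fintype.card K),
      Real.sqrt ((i:ℝ)+1) * P (e i) ≤ Real.sqrt B * P (e i) ^ ((2:ℝ)/3) := by
    intro i
    have hp := hpos (e i)
    have hrw : Real.sqrt ((i:ℝ)+1) * P (e i)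
        = Real.sqrt (((i:ℝ)+1) * P (e i) ^ ((2:ℝ)/3)) * P (e i) ^ ((2:ℝ)/3) := by
      rw [Real.sqrt_mul (by positivity), Real.sqrt_eq_rpow (P (e i) ^ ((2:ℝ)/3)),
        ← Real.rpow_mul hp.le, mul_assoc, ← Real.rpow_add hp]
      norm_num
    rw [hrw]
    exact mul_le_mul_of_nonneg_right (Real.sqrt_le_sqrt (hkey i))
      (Real.rpow_pos_of_pos hp _).le
  have hTQub : TQ ≤ Real.sqrt B * B := by
    calc TQ ≤ ∑ i : Fin (Fintype.card K), Real.sqrt B * P (e i) ^ ((2:ℝ)/3) :=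
          Finset.sum_le_sum fun i _ => hterm i
      _ = Real.sqrt B * B := by rw [← Finset.mul_sum, ← hBe]
  have hy : 0 < Real.logb 2 TQ := Real.logb_pos one_lt_two hTQ
  have hyub : Real.logb 2 TQ ≤ (3/2) * Real.logb 2 B := by
    have h32 : Real.logb 2 (Real.sqrt B * B) = (3/2) * Real.logb 2 B := by
      rw [Real.logb_mul (Real.sqrt_ne_zero'.mpr hBpos) hBpos.ne', Real.logb, Real.logb,
        Real.log_sqrt hBpos.le]
      ring
    rw [← h32]
    exact Real.logb_le_logb_of_le one_lt_two hTQpos hTQub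
  have hdpos : 0 < Real.logb 2 B := by linarith
  have hc0 : 0 ≤ 2 * Real.logb 2 A - Real.logb 2 (1 + Real.logb 2 (Fintype.card K)) := by
    linarith [hH]
  have hx0 : 0 ≤ Real.logb 2 TC := by linarith
  rw [ge_iff_le, div_le_div_iff₀ (by linarith : (0:ℝ) < 3 * Real.logb 2 B) hy]
  nlinarith [mul_le_mul_of_nonneg_right hx hy.le,
    mul_le_mul_of_nonneg_left hyub hx0]
end

section
/- Let χ be a probability distribution on a finite set A with |A| ≥ 2 whose probability mass function is not constant. Then there exist a constant C > 0 and N₀ ∈ ℕ such that for every n ≥ N₀ the following holds: writing p_1^{(n)} ≥ p_2^{(n)} ≥ ⋯ for the values of the pmf of the product distribution χ^n on A^n listed in decreasing order, T_C := ∑_i i · p_i^{(n)} and T_Q := ∑_i √i · p_i^{(n)}, one has log₂ T_C / log₂ T_Q ≥ 2 · (H_{1/2}(χ) / H_{2/3}(χ)) · (1 − C · log₂(n)/n). -/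
open Finset Real Filter

private lemma sum_prod_pow_aux {A : Type*} [Fintype A] (n : ℕ) (g : A → ℝ) :
    ∑ f : Fin n → A, ∏ t, g (f t) = (∑ a, g a) ^ n := by
  classical
  calc ∑ f : Fin n → A, ∏ t, g (f t)
      = ∑ f ∈ Fintype.piFinset (fun _ : Fin n => (Finset.univ : Finset A)), ∏ t, g (f t) := by
        rw [Fintype.piFinset_univ]
    _ = ∏ _t : Fin n, ∑ a, g a := (Finset.prod_univ_sum _ _).symm
    _ = (∑ a, g a) ^ n := by simp

private lemma harmonic_sum_le (M : ℕ) :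
    ∑ i : Fin M, 1 / ((i : ℝ) + 1) ≤ 1 + Real.log M := by
  have h1 : ∑ i : Fin M, 1 / ((i : ℝ) + 1) = ((harmonic M : ℚ) : ℝ) := by
    rw [Fin.sum_univ_eq_sum_range (fun i => 1 / ((i : ℝ) + 1)) M]
    push_cast [harmonic]
    simp [one_div]
  rw [h1]
  exact harmonic_le_one_add_log M

private lemma expand_aux (L1 L2 K x nn : ℝ) (hL1 : L1 ≠ 0) (hL2 : L2 ≠ 0) (hnn : nn ≠ 0) :
    2 * (2 * L1 / (3 * L2)) * (1 - K / (2 * L1) * x / nn) * (3 / 2 * nn * L2)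
      = 2 * nn * L1 - K * x := by
  field_simp

set_option maxHeartbeats 1000000 in
/-- **Asymptotic super-quadratic speed-up for product distributions.** Let `χ` be a
distribution on a finite set `A` with `|A| ≥ 2` whose pmf `P` is not constant. Then
there are `C > 0` and `N₀` such that for all `n ≥ N₀` and every enumeration `e` of the
keys of the product distribution `χ^n` on `A^n` in decreasing order of probability,
with `T_C = ∑ i, i·p_i^{(n)}` and `T_Q = ∑ i, √i·p_i^{(n)}`,
`log₂ T_C / log₂ T_Q ≥ 2 · (H_{1/2}(χ)/H_{2/3}(χ)) · (1 − C·log₂(n)/n)`. -/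
theorem product_speedup {A : Type*} [Fintype A]
    (hA : 2 ≤ Fintype.card A)
    (P : A → ℝ) (hpos : ∀ a, 0 < P a) (hle : ∀ a, P a ≤ 1)
    (hsum : ∑ a, P a = 1)
    (hnonconst : ∃ a b, P a ≠ P b) :
    ∃ C > (0 : ℝ), ∃ N₀ : ℕ, ∀ n ≥ N₀,
      ∀ e : Fin (Fintype.card (Fin n → A)) ≃ (Fin n → A),
        (∀ i j, i ≤ j → (∏ t, P (e j t)) ≤ ∏ t, P (e i t)) →
        Real.logb 2 (∑ i : Fin (Fintype.card (Fin n → A)), ((i : ℝ) + 1) * ∏ t, P (e i t)) /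
            Real.logb 2 (∑ i : Fin (Fintype.card (Fin n → A)), Real.sqrt ((i : ℝ) + 1) * ∏ t, P (e i t)) ≥
          2 * ((2 * Real.logb 2 (∑ a, P a ^ ((1 : ℝ) / 2))) /
                (3 * Real.logb 2 (∑ a, P a ^ ((2 : ℝ) / 3)))) *
            (1 - C * Real.logb 2 n / n) := by
  classical
  have hNeA : Nonempty A := Fintype.card_pos_iff.mp (by omega)
  have hPlt1 : ∀ a, P a < 1 := by
    intro a
    obtain ⟨b, hb⟩ := Fintype.exists_ne_of_one_lt_card (by omega) a
    have h2 : P a + P b ≤ ∑ c, P c := by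
      have hsub := Finset.sum_le_sum_of_subset_of_nonneg
        (Finset.subset_univ ({a, b} : Finset A)) (fun c _ _ => (hpos c).le)
      rwa [Finset.sum_pair (Ne.symm hb)] at hsub
    nlinarith [hpos b]
  set σ₁ := ∑ a, P a ^ ((1 : ℝ) / 2) with hσ₁def
  set σ₂ := ∑ a, P a ^ ((2 : ℝ) / 3) with hσ₂def
  have hrpow_gt : ∀ (r : ℝ), 0 < r → r < 1 → (1 : ℝ) < ∑ a, P a ^ r := by
    intro r hr0 hr1
    have h1 : ∑ a, P a < ∑ a, P a ^ r := by
      apply Finset.sum_lt_sum_of_nonempty Finset.univ_nonempty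
      intro a _
      have := Real.rpow_lt_rpow_of_exponent_gt (hpos a) (hPlt1 a) hr1
      rwa [Real.rpow_one] at this
    linarith [h1, hsum.ge]
  have hσ₁gt : (1 : ℝ) < σ₁ := hrpow_gt _ (by norm_num) (by norm_num)
  have hσ₂gt : (1 : ℝ) < σ₂ := hrpow_gt _ (by norm_num) (by norm_num)
  have hσ₁0 : (0 : ℝ) < σ₁ := by linarith
  have hσ₂0 : (0 : ℝ) < σ₂ := by linarith
  set L1 := Real.logb 2 σ₁ with hL1def
  set L2 := Real.logb 2 σ₂ with hL2def
  have hL1 : 0 < L1 := Real.logb_pos one_lt_two hσ₁gt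
  have hL2 : 0 < L2 := Real.logb_pos one_lt_two hσ₂gt
  set c := Real.log (Fintype.card A) with hcdef
  have hc0 : 0 < c := Real.log_pos (by exact_mod_cast hA)
  set K := 1 + Real.logb 2 (1 + c) with hKdef
  have hK1 : 1 ≤ K := by
    have : 0 ≤ Real.logb 2 (1 + c) := Real.logb_nonneg one_lt_two (by linarith)
    linarith
  have hK0 : 0 < K := by linarith
  refine ⟨K / (2 * L1), by positivity, ?_⟩
  have hten : Tendsto (fun n : ℕ => Real.log n / n) atTop (nhds 0) := by
    have h := Real.isLittleO_log_id_atTop.tendsto_div_nhds_zero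
    exact h.comp tendsto_natCast_atTop_atTop
  have hev : ∀ᶠ n : ℕ in atTop, Real.log n / n < L1 * Real.log 2 / K :=
    hten.eventually_lt_const (by positivity)
  obtain ⟨N₁, hN₁⟩ := eventually_atTop.mp hev
  refine ⟨max N₁ 2, fun n hn e hsort => ?_⟩
  have hn2 : 2 ≤ n := le_trans (le_max_right _ _) hn
  have hnN₁ : N₁ ≤ n := le_trans (le_max_left _ _) hn
  have hn0 : (0 : ℝ) < n := by exact_mod_cast (by omega : 0 < n)
  have hlogn1 : 1 ≤ Real.logb 2 n := by
    rw [show (1:ℝ) = Real.logb 2 2 from (Real.logb_self_eq_one one_lt_two).symm]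
    exact Real.logb_le_logb_of_le one_lt_two (by norm_num) (by exact_mod_cast hn2)
  have hlogn0 : 0 ≤ Real.logb 2 n := by linarith
  have hNn : K * Real.logb 2 n ≤ L1 * n := by
    have h1 := hN₁ n hnN₁
    have hlog2 : (0 : ℝ) < Real.log 2 := Real.log_pos one_lt_two
    rw [div_lt_div_iff₀ hn0 hK0] at h1
    rw [← Real.log_div_log, ← mul_div_assoc, div_le_iff₀ hlog2]
    nlinarith [h1]
  have hMcard : Fintype.card (Fin n → A) = Fintype.card A ^ n := by
    rw [Fintype.card_fun, Fintype.card_fin]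
  have hM2 : 2 ≤ Fintype.card (Fin n → A) := by
    rw [hMcard]
    calc 2 = 2 ^ 1 := rfl
    _ ≤ 2 ^ n := Nat.pow_le_pow_right (by norm_num) (by omega)
    _ ≤ Fintype.card A ^ n := Nat.pow_le_pow_left hA n
  set p : Fin (Fintype.card (Fin n → A)) → ℝ := fun i => ∏ t, P (e i t) with hpdef
  have hp' : ∀ i, (∏ t, P (e i t)) = p i := fun _ => rfl
  simp only [hp'] at hsort ⊢
  have hp_pos : ∀ i, 0 < p i := fun i => Finset.prod_pos (fun t _ => hpos _)
  have hsum_p : ∑ i, p i = 1 := by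
    rw [hpdef]
    rw [Equiv.sum_comp e (fun f => ∏ t, P (f t)), sum_prod_pow_aux n P, hsum, one_pow]
  have hQ : ∑ i, Real.sqrt (p i) = σ₁ ^ n := by
    have h1 : ∀ i, Real.sqrt (p i) = ∏ t, P (e i t) ^ ((1 : ℝ) / 2) := by
      intro i
      rw [Real.sqrt_eq_rpow]
      exact (Real.finset_prod_rpow Finset.univ (fun t => P (e i t))
        (fun t _ => (hpos _).le) _).symm
    simp_rw [h1]
    rw [Equiv.sum_comp e (fun f => ∏ t, P (f t) ^ ((1 : ℝ) / 2)),
      sum_prod_pow_aux n (fun a => P a ^ ((1 : ℝ) / 2))]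
  have hS : ∑ i, p i ^ ((2 : ℝ) / 3) = σ₂ ^ n := by
    have h1 : ∀ i, p i ^ ((2 : ℝ) / 3) = ∏ t, P (e i t) ^ ((2 : ℝ) / 3) := by
      intro i
      exact (Real.finset_prod_rpow Finset.univ (fun t => P (e i t))
        (fun t _ => (hpos _).le) _).symm
    simp_rw [h1]
    rw [Equiv.sum_comp e (fun f => ∏ t, P (f t) ^ ((2 : ℝ) / 3)),
      sum_prod_pow_aux n (fun a => P a ^ ((2 : ℝ) / 3))]
  set TC := ∑ i : Fin (Fintype.card (Fin n → A)), ((i : ℝ) + 1) * p i with hTCdef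
  set TQ := ∑ i : Fin (Fintype.card (Fin n → A)), Real.sqrt ((i : ℝ) + 1) * p i with hTQdef
  set W := σ₂ ^ n with hWdef
  have hW1 : (1 : ℝ) < W := one_lt_pow₀ hσ₂gt (by omega)
  have hW0 : (0 : ℝ) < W := by linarith
  have hsorted23 : ∀ i : Fin (Fintype.card (Fin n → A)), ((i : ℝ) + 1) * p i ^ ((2 : ℝ) / 3) ≤ W := by
    intro i
    have hcard : ((Finset.Iic i).card : ℝ) = (i : ℝ) + 1 := by
      rw [Fin.card_Iic]; push_cast; ring
    calc ((i : ℝ) + 1) * p i ^ ((2 : ℝ) / 3)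
        = ∑ _j ∈ Finset.Iic i, p i ^ ((2 : ℝ) / 3) := by
          rw [Finset.sum_const, nsmul_eq_mul, hcard]
      _ ≤ ∑ j ∈ Finset.Iic i, p j ^ ((2 : ℝ) / 3) := by
          apply Finset.sum_le_sum
          intro j hj
          exact Real.rpow_le_rpow (hp_pos i).le (hsort j i (Finset.mem_Iic.mp hj)) (by norm_num)
      _ ≤ ∑ j, p j ^ ((2 : ℝ) / 3) := by
          apply Finset.sum_le_sum_of_subset_of_nonneg (Finset.subset_univ _)
          intro j _ _
          exact Real.rpow_nonneg (hp_pos j).le _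
      _ = W := hS
  have hTQle : TQ ≤ W ^ ((3 : ℝ) / 2) := by
    have hterm : ∀ i : Fin (Fintype.card (Fin n → A)), Real.sqrt ((i : ℝ) + 1) * p i ≤
        Real.sqrt W * p i ^ ((2 : ℝ) / 3) := by
      intro i
      have hi0 : (0 : ℝ) ≤ (i : ℝ) + 1 := by positivity
      have e1 : Real.sqrt (p i ^ ((2 : ℝ) / 3)) = p i ^ ((1 : ℝ) / 3) := by
        rw [Real.sqrt_eq_rpow, ← Real.rpow_mul (hp_pos i).le]
        norm_num
      have e2 : p i ^ ((1 : ℝ) / 3) * p i ^ ((2 : ℝ) / 3) = p i := by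
        rw [← Real.rpow_add (hp_pos i)]; norm_num
      calc Real.sqrt ((i : ℝ) + 1) * p i
          = Real.sqrt (((i : ℝ) + 1) * p i ^ ((2 : ℝ) / 3)) * p i ^ ((2 : ℝ) / 3) := by
            rw [Real.sqrt_mul hi0, e1, mul_assoc, e2]
        _ ≤ Real.sqrt W * p i ^ ((2 : ℝ) / 3) := by
            apply mul_le_mul_of_nonneg_right (Real.sqrt_le_sqrt (hsorted23 i))
            exact Real.rpow_nonneg (hp_pos i).le _
    have hW32 : Real.sqrt W * W = W ^ ((3 : ℝ) / 2) := by
      have h32 : W ^ ((3 : ℝ) / 2) = W ^ ((1 : ℝ) / 2) * W ^ (1 : ℝ) := by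
        rw [← Real.rpow_add hW0]; norm_num
      rw [h32, Real.rpow_one, Real.sqrt_eq_rpow]
    calc TQ ≤ ∑ i : Fin (Fintype.card (Fin n → A)), Real.sqrt W * p i ^ ((2 : ℝ) / 3) := Finset.sum_le_sum (fun i _ => hterm i)
      _ = Real.sqrt W * W := by rw [← Finset.mul_sum, hS]
      _ = W ^ ((3 : ℝ) / 2) := hW32
  have hi1 : 1 < Fintype.card (Fin n → A) := by omega
  have hTQ1 : 1 < TQ := by
    rw [← hsum_p, hTQdef]
    have hlt : (1 : ℝ) < Real.sqrt 2 := by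
      rw [show (1:ℝ) = Real.sqrt 1 from (Real.sqrt_one).symm]
      exact Real.sqrt_lt_sqrt (by norm_num) (by norm_num)
    refine Finset.sum_lt_sum (fun i _ => ?_) ⟨⟨1, hi1⟩, Finset.mem_univ _, ?_⟩
    · have h1 : (1 : ℝ) ≤ Real.sqrt ((i : ℝ) + 1) := by
        nth_rewrite 1 [show (1:ℝ) = Real.sqrt 1 from (Real.sqrt_one).symm]
        apply Real.sqrt_le_sqrt
        have hi0 : (0:ℝ) ≤ ((i : ℕ) : ℝ) := Nat.cast_nonneg _
        linarith
      nlinarith [hp_pos i, h1]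
    · have h2 : Real.sqrt ((((⟨1, hi1⟩ : Fin (Fintype.card (Fin n → A))) : ℕ) : ℝ) + 1)
          = Real.sqrt 2 := by
        norm_num
      rw [h2]
      nlinarith [hp_pos ⟨1, hi1⟩, hlt]
  have hTQ0 : 0 < TQ := by linarith
  have hlogTQpos : 0 < Real.logb 2 TQ := Real.logb_pos one_lt_two hTQ1
  have hlogTQle : Real.logb 2 TQ ≤ 3 / 2 * (n : ℝ) * L2 := by
    have h1 : Real.logb 2 (W ^ ((3 : ℝ) / 2)) = 3 / 2 * (n : ℝ) * L2 := by
      rw [hL2def, hWdef, ← Real.log_div_log, ← Real.log_div_log, Real.log_rpow (pow_pos hσ₂0 n), Real.log_pow]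
      field_simp
    calc Real.logb 2 TQ ≤ Real.logb 2 (W ^ ((3 : ℝ) / 2)) :=
          Real.logb_le_logb_of_le one_lt_two hTQ0 hTQle
      _ = 3 / 2 * (n : ℝ) * L2 := h1
  have hQpos : (0 : ℝ) < σ₁ ^ n := by positivity
  have hHle : ∑ i : Fin (Fintype.card (Fin n → A)), 1 / ((i : ℝ) + 1) ≤
      1 + Real.log (Fintype.card (Fin n → A)) := harmonic_sum_le _
  have hlogM0 : (0 : ℝ) ≤ Real.log (Fintype.card (Fin n → A)) :=
    Real.log_nonneg (by exact_mod_cast (by omega : 1 ≤ Fintype.card (Fin n → A)))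
  have hCS : (σ₁ ^ n) ^ 2 ≤ TC * (1 + Real.log (Fintype.card (Fin n → A))) := by
    have h := Finset.sum_mul_sq_le_sq_mul_sq Finset.univ
      (fun i : Fin (Fintype.card (Fin n → A)) => Real.sqrt (((i : ℝ) + 1) * p i))
      (fun i : Fin (Fintype.card (Fin n → A)) => Real.sqrt (1 / ((i : ℝ) + 1)))
    have e1 : ∀ i : Fin (Fintype.card (Fin n → A)),
        Real.sqrt (((i : ℝ) + 1) * p i) * Real.sqrt (1 / ((i : ℝ) + 1))
        = Real.sqrt (p i) := by
      intro i
      have hi0 : (0:ℝ) ≤ ((i : ℕ) : ℝ) := Nat.cast_nonneg _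
      have hp0 := (hp_pos i).le
      rw [← Real.sqrt_mul (by positivity : (0:ℝ) ≤ ((i : ℝ) + 1) * p i) (1 / ((i : ℝ) + 1))]
      congr 1
      have hi : ((i : ℝ) + 1) ≠ 0 := by positivity
      field_simp
    have e2 : ∀ i : Fin (Fintype.card (Fin n → A)),
        Real.sqrt (((i : ℝ) + 1) * p i) ^ 2 = ((i : ℝ) + 1) * p i := by
      intro i
      have hi0 : (0:ℝ) ≤ ((i : ℕ) : ℝ) := Nat.cast_nonneg _
      have hp0 := (hp_pos i).le
      exact Real.sq_sqrt (by positivity)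
    have e3 : ∀ i : Fin (Fintype.card (Fin n → A)),
        Real.sqrt (1 / ((i : ℝ) + 1)) ^ 2 = 1 / ((i : ℝ) + 1) := by
      intro i
      have hi0 : (0:ℝ) ≤ ((i : ℕ) : ℝ) := Nat.cast_nonneg _
      exact Real.sq_sqrt (by positivity)
    simp only [e1, e2, e3] at h
    rw [hQ] at h
    calc (σ₁ ^ n) ^ 2 ≤ TC * ∑ i : Fin (Fintype.card (Fin n → A)), 1 / ((i : ℝ) + 1) := h
      _ ≤ TC * (1 + Real.log (Fintype.card (Fin n → A))) := by
          apply mul_le_mul_of_nonneg_left hHle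
          rw [hTCdef]
          apply Finset.sum_nonneg
          intro i _
          have := hp_pos i
          positivity
  have hlogM1 : (0 : ℝ) < 1 + Real.log (Fintype.card (Fin n → A)) := by linarith
  have hTClb : (σ₁ ^ n) ^ 2 / (1 + Real.log (Fintype.card (Fin n → A))) ≤ TC := by
    rw [div_le_iff₀ hlogM1]
    exact hCS
  have hTClbpos : (0 : ℝ) < (σ₁ ^ n) ^ 2 / (1 + Real.log (Fintype.card (Fin n → A))) := by
    positivity
  have hlogTC : 2 * (n : ℝ) * L1 - Real.logb 2 (1 + Real.log (Fintype.card (Fin n → A)))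
      ≤ Real.logb 2 TC := by
    calc 2 * (n : ℝ) * L1 - Real.logb 2 (1 + Real.log (Fintype.card (Fin n → A)))
        = Real.logb 2 ((σ₁ ^ n) ^ 2 / (1 + Real.log (Fintype.card (Fin n → A)))) := by
          rw [Real.logb_div (by positivity) (by positivity), Real.logb_pow, Real.logb_pow,
            ← hL1def]
          push_cast
          ring
      _ ≤ Real.logb 2 TC := Real.logb_le_logb_of_le one_lt_two hTClbpos hTClb
  have hKey : Real.logb 2 (1 + Real.log (Fintype.card (Fin n → A))) ≤ K * Real.logb 2 n := by
    have hlogM : Real.log (Fintype.card (Fin n → A)) = (n : ℝ) * c := by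
      rw [hMcard, hcdef]
      push_cast
      rw [Real.log_pow]
    rw [hlogM]
    have h1 : 1 + (n : ℝ) * c ≤ (n : ℝ) * (1 + c) := by
      have h2 : (1 : ℝ) ≤ n := by exact_mod_cast (by omega : 1 ≤ n)
      nlinarith
    calc Real.logb 2 (1 + (n : ℝ) * c)
        ≤ Real.logb 2 ((n : ℝ) * (1 + c)) :=
          Real.logb_le_logb_of_le one_lt_two (by positivity) h1
      _ = Real.logb 2 n + Real.logb 2 (1 + c) := by
          rw [Real.logb_mul (by positivity) (by positivity)]
      _ ≤ Real.logb 2 n + Real.logb 2 (1 + c) * Real.logb 2 n := by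
          have h2 : 0 ≤ Real.logb 2 (1 + c) := Real.logb_nonneg one_lt_two (by linarith)
          nlinarith
      _ = K * Real.logb 2 n := by rw [hKdef]; ring
  obtain ⟨num, hnumdef⟩ : ∃ x : ℝ,
      x = 2 * (n : ℝ) * L1 - Real.logb 2 (1 + Real.log (Fintype.card (Fin n → A))) := ⟨_, rfl⟩
  have hnum_lb : (n : ℝ) * L1 ≤ num := by
    rw [hnumdef]
    have h3 := hKey.trans hNn
    linarith
  have hnum_pos : 0 < num := lt_of_lt_of_le (mul_pos hn0 hL1) hnum_lb
  have hD : (0 : ℝ) < 3 / 2 * (n : ℝ) * L2 :=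
    mul_pos (mul_pos (by norm_num : (0:ℝ) < 3 / 2) hn0) hL2
  have step1 : num / (3 / 2 * (n : ℝ) * L2) ≤ num / Real.logb 2 TQ :=
    div_le_div_of_nonneg_left hnum_pos.le hlogTQpos hlogTQle
  have hnum_le : num ≤ Real.logb 2 TC := by rw [hnumdef]; exact hlogTC
  have step2 : num / Real.logb 2 TQ ≤ Real.logb 2 TC / Real.logb 2 TQ :=
    div_le_div_of_nonneg_right hnum_le hlogTQpos.le
  have step0 : 2 * (2 * L1 / (3 * L2)) * (1 - K / (2 * L1) * Real.logb 2 n / n)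
      ≤ num / (3 / 2 * (n : ℝ) * L2) := by
    rw [le_div_iff₀ hD]
    have expand : 2 * (2 * L1 / (3 * L2)) * (1 - K / (2 * L1) * Real.logb 2 n / n) *
        (3 / 2 * (n : ℝ) * L2) = 2 * (n : ℝ) * L1 - K * Real.logb 2 n :=
      expand_aux L1 L2 K (Real.logb 2 n) (n : ℝ) hL1.ne' hL2.ne' hn0.ne' 
    rw [expand, hnumdef]
    linarith [hKey]
  exact le_trans (le_trans step0 step1) step2
end

section
/- Let χ be a probability distribution on a finite set A. There exists a constant c > 0, depending only on χ, such that for every ε ∈ (0,1) and every n ≥ 1, setting δ := c · √(ln(1/ε)/n), the probability that a sample k drawn from χ^n lies in the core set satisfies Pr_{k ← χ^n}[k ∈ C^{n,δ}_χ] ≥ 1 − ε. -/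
/-! With `Y = -log P`, of mean `μ = H(χ) ln 2` and deviation `|Y - μ| ≤ B`, the core-set condition
reads `∑ᵢ Y(kᵢ) ≤ n (μ + δ ln 2)`, so the complement of the core set is an upper tail of a sum of
`n` i.i.d. bounded variables. The Chernoff bound, with `eˢ ≤ 1 + s + s²` for `|s| ≤ 1` as the
estimate of the moment generating function, bounds that tail by `exp (-n (δ ln 2)² / 4B²)`,
which equals `ε` for `c = 2B / ln 2`. -/

open Finset Real

section ProductWeights

variable {A : Type*} [Fintype A] {P : A → ℝ}

lemma sum_mul_exp_le_exp (hP0 : ∀ a, 0 ≤ P a) (hP1 : ∑ a, P a = 1) {X : A → ℝ} {B t : ℝ}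
    (hX : ∀ a, |X a - ∑ x, P x * X x| ≤ B) (ht : 0 ≤ t) (htB : t * B ≤ 1) :
    ∑ a, P a * exp (t * X a) ≤ exp (t * ∑ x, P x * X x + t ^ 2 * B ^ 2) := by
  set μ := ∑ x, P x * X x with hμ
  have hpt : ∀ a, exp (t * (X a - μ)) ≤ 1 + t * (X a - μ) + t ^ 2 * B ^ 2 := by
    intro a
    have hs : |t * (X a - μ)| ≤ t * B := by
      rw [abs_mul, abs_of_nonneg ht]
      exact mul_le_mul_of_nonneg_left (hX a) ht
    have hsq : (t * (X a - μ)) ^ 2 ≤ t ^ 2 * B ^ 2 := by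
      rw [← sq_abs, ← mul_pow]
      exact pow_le_pow_left₀ (abs_nonneg _) hs 2
    linarith [(abs_le.1 (abs_exp_sub_one_sub_id_le (hs.trans htB))).2]
  calc ∑ a, P a * exp (t * X a) = exp (t * μ) * ∑ a, P a * exp (t * (X a - μ)) := by
        rw [mul_sum]
        refine sum_congr rfl fun a _ => ?_
        rw [mul_left_comm, ← exp_add]
        congr 2
        ring
    _ ≤ exp (t * μ) * ∑ a, P a * (1 + t * (X a - μ) + t ^ 2 * B ^ 2) := by
        gcongr with a
        · exact hP0 a
        · exact hpt a
    _ = exp (t * μ) * (1 + t ^ 2 * B ^ 2) := by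
        simp only [mul_add, mul_sub, mul_one, sum_add_distrib, sum_sub_distrib, mul_left_comm _ t,
          ← mul_sum, ← sum_mul, hP1, ← hμ]
        ring
    _ ≤ exp (t * μ) * exp (t ^ 2 * B ^ 2) := by
        gcongr
        linarith [add_one_le_exp (t ^ 2 * B ^ 2)]
    _ = exp (t * μ + t ^ 2 * B ^ 2) := (exp_add _ _).symm

lemma sum_filter_prod_le_exp_mul_pow (hP0 : ∀ a, 0 ≤ P a) (X : A → ℝ) {t : ℝ} (ht : 0 ≤ t)
    (T : ℝ) (n : ℕ) :
    ∑ a ∈ univ.filter (fun a : Fin n → A => T < ∑ i, X (a i)), ∏ i, P (a i)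
      ≤ exp (-(t * T)) * (∑ x, P x * exp (t * X x)) ^ n := by
  have hprod : ∀ a : Fin n → A, 0 ≤ ∏ i, P (a i) := fun a => prod_nonneg fun i _ => hP0 (a i)
  rw [Fintype.sum_pow, mul_sum]
  refine (sum_le_sum fun a ha => ?_).trans
    (sum_le_sum_of_subset_of_nonneg (filter_subset _ _) fun a _ _ => ?_)
  · have hT := (mem_filter.1 ha).2
    rw [prod_mul_distrib, ← exp_sum, mul_left_comm, ← exp_add, ← mul_sum]
    refine le_mul_of_one_le_right (hprod a) (one_le_exp ?_)
    nlinarith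
  · rw [prod_mul_distrib]
    exact mul_nonneg (exp_nonneg _) (mul_nonneg (hprod a) (prod_nonneg fun i _ => exp_nonneg _))

lemma sum_filter_prod_le_exp_neg_sq (hP0 : ∀ a, 0 ≤ P a) (hP1 : ∑ a, P a = 1) {X : A → ℝ}
    {B δ : ℝ} (hB : 0 < B) (hX : ∀ a, |X a - ∑ x, P x * X x| ≤ B) (hδ : 0 ≤ δ) (n : ℕ) :
    ∑ a ∈ univ.filter (fun a : Fin n → A => n * (∑ x, P x * X x + δ) < ∑ i, X (a i)),
        ∏ i, P (a i)
      ≤ exp (-(n * δ ^ 2 / (4 * B ^ 2))) := by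
  set μ := ∑ x, P x * X x
  rcases le_or_gt δ B with hδB | hBδ
  · -- `t = δ / (2B²)` minimises the exponent `-tδ + t²B²`.
    set t := δ / (2 * B ^ 2) with ht
    have ht0 : 0 ≤ t := by positivity
    have htB : t * B ≤ 1 := by
      rw [ht, div_mul_eq_mul_div, div_le_one (by positivity)]
      nlinarith
    calc _ ≤ exp (-(t * (n * (μ + δ)))) * (∑ x, P x * exp (t * X x)) ^ n :=
          sum_filter_prod_le_exp_mul_pow hP0 X ht0 _ n
      _ ≤ exp (-(t * (n * (μ + δ)))) * exp (t * μ + t ^ 2 * B ^ 2) ^ n := by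
          gcongr
          · exact sum_nonneg fun x _ => mul_nonneg (hP0 x) (exp_nonneg _)
          · exact sum_mul_exp_le_exp hP0 hP1 hX ht0 htB
      _ = exp (-(n * δ ^ 2 / (4 * B ^ 2))) := by
          rw [← exp_nat_mul, ← exp_add, ht]
          congr 1
          field_simp
          ring
  · have hle : ∀ a : Fin n → A, ∑ i, X (a i) ≤ n * (μ + δ) := fun a => by
      calc ∑ i, X (a i) ≤ ∑ _i : Fin n, (μ + δ) :=
            sum_le_sum fun i _ => by linarith [(abs_le.1 (hX (a i))).2]
        _ = n * (μ + δ) := by rw [sum_const, card_univ, Fintype.card_fin, nsmul_eq_mul]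
    rw [filter_false_of_mem fun a _ => not_lt.2 (hle a), sum_empty]
    exact (exp_pos _).le

lemma sum_filter_prod_le_eps (hP0 : ∀ a, 0 ≤ P a) (hP1 : ∑ a, P a = 1) {X : A → ℝ} {B : ℝ}
    (hB : 0 < B) (hX : ∀ a, |X a - ∑ x, P x * X x| ≤ B) {ε : ℝ} (hε : 0 < ε) (hε1 : ε ≤ 1)
    {n : ℕ} (hn : 1 ≤ n) :
    ∑ a ∈ univ.filter (fun a : Fin n → A =>
        n * (∑ x, P x * X x + 2 * B * √(log (1 / ε) / n)) < ∑ i, X (a i)), ∏ i, P (a i)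
      ≤ ε := by
  have hL : 0 ≤ log (1 / ε) := log_nonneg (by rw [le_div_iff₀ hε]; linarith)
  have hn0 : (0 : ℝ) < n := by exact_mod_cast hn
  have hexp : n * (2 * B * √(log (1 / ε) / n)) ^ 2 / (4 * B ^ 2) = log (1 / ε) := by
    rw [mul_pow, mul_pow, sq_sqrt (div_nonneg hL hn0.le)]
    field_simp
    ring
  calc _ ≤ exp (-(n * (2 * B * √(log (1 / ε) / n)) ^ 2 / (4 * B ^ 2))) :=
        sum_filter_prod_le_exp_neg_sq hP0 hP1 hB hX (by positivity) n
    _ = ε := by rw [hexp, one_div, log_inv, neg_neg, exp_log hε]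

lemma sum_filter_le_prod_eq_one_sub (hP1 : ∑ a, P a = 1) (X : A → ℝ) (T : ℝ) (n : ℕ) :
    ∑ a ∈ univ.filter (fun a : Fin n → A => ∑ i, X (a i) ≤ T), ∏ i, P (a i)
      = 1 - ∑ a ∈ univ.filter (fun a : Fin n → A => T < ∑ i, X (a i)), ∏ i, P (a i) := by
  have hsplit := sum_filter_add_sum_filter_not univ
    (fun a : Fin n → A => ∑ i, X (a i) ≤ T) (fun a => ∏ i, P (a i))
  rw [← Fintype.sum_pow, hP1, one_pow] at hsplit
  simp only [not_le] at hsplit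
  linarith

end ProductWeights

lemma entropy_mul_log_two {A : Type*} [Fintype A] (P : A → ℝ) :
    (-∑ x, P x * logb 2 (P x)) * log 2 = ∑ x, P x * -log (P x) := by
  rw [neg_mul, sum_mul, ← sum_neg_distrib]
  refine sum_congr rfl fun x _ => ?_
  rw [logb, mul_assoc, div_mul_cancel₀ _ (log_pos one_lt_two).ne']
  ring

lemma two_rpow_le_prod_iff {A : Type*} {P : A → ℝ} (hP : ∀ a, 0 < P a) {n : ℕ}
    (a : Fin n → A) (H δ : ℝ) :
    (2 : ℝ) ^ (-(H * n) - δ * n) ≤ ∏ i, P (a i)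
      ↔ ∑ i, -log (P (a i)) ≤ n * (H * log 2 + δ * log 2) := by
  rw [rpow_le_iff_le_log two_pos (prod_pos fun i _ => hP (a i)),
    log_prod fun i _ => (hP (a i)).ne', sum_neg_distrib]
  constructor <;> intro h <;> linarith

theorem core_set_mass_eps_general {A : Type*} [Fintype A]
    (P : A → ℝ) (hpos : ∀ a, 0 < P a)
    (hsum : ∑ a, P a = 1) :
    ∃ c > (0 : ℝ), ∀ ε : ℝ, 0 < ε → ε < 1 → ∀ n : ℕ, 1 ≤ n →
      1 - ε ≤
        ∑ a ∈ Finset.univ.filter (fun a : Fin n → A =>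
            (2 : ℝ) ^ (-((-∑ x, P x * Real.logb 2 (P x)) * n) -
              (c * Real.sqrt (Real.log (1 / ε) / n)) * n) ≤ ∏ i, P (a i)),
          ∏ i, P (a i) := by
  set μ := ∑ x, P x * -log (P x)
  set B := 1 + ∑ x, |-log (P x) - μ|
  have hdev : ∀ a, |-log (P a) - μ| ≤ B := fun a => by
    linarith [single_le_sum (f := fun x => |-log (P x) - μ|) (fun _ _ => abs_nonneg _)
      (mem_univ a)]
  have hlog2 : 0 < log 2 := log_pos one_lt_two
  refine ⟨2 * B / log 2, by positivity, fun ε hε hε1 n hn => ?_⟩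
  have hc : 2 * B / log 2 * √(log (1 / ε) / n) * log 2 = 2 * B * √(log (1 / ε) / n) := by
    field_simp
  simp_rw [two_rpow_le_prod_iff hpos, entropy_mul_log_two, hc]
  rw [sum_filter_le_prod_eq_one_sub hsum (fun x => -log (P x))]
  linarith [sum_filter_prod_le_eps (fun a => (hpos a).le) hsum (by positivity) hdev hε hε1.le hn]

/-- **Core set with probability mass 1 − ε.** Let `χ` be a distribution on a finite
set `A` with pmf `P`, Shannon entropy `H(χ) = −∑ a, P a · log₂ (P a)`, and core set
`C^{n,δ}_χ = { a ∈ A^n : ∏ i, P (a i) ≥ 2^{−H(χ)·n − δ·n} }`. There is a constant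
`c > 0` (depending only on `χ`) such that for every `ε ∈ (0,1)` and every `n ≥ 1`,
taking `δ = c·√(ln(1/ε)/n)` gives `Pr_{k ← χ^n}[k ∈ C^{n,δ}_χ] ≥ 1 − ε`. -/
theorem core_set_mass_eps {A : Type*} [Fintype A]
    (P : A → ℝ) (hpos : ∀ a, 0 < P a) (hle : ∀ a, P a ≤ 1)
    (hsum : ∑ a, P a = 1) :
    ∃ c > (0 : ℝ), ∀ ε : ℝ, 0 < ε → ε < 1 → ∀ n : ℕ, 1 ≤ n →
      1 - ε ≤
        ∑ a ∈ Finset.univ.filter (fun a : Fin n → A =>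
            (2 : ℝ) ^ (-((-∑ x, P x * Real.logb 2 (P x)) * n) -
              (c * Real.sqrt (Real.log (1 / ε) / n)) * n) ≤ ∏ i, P (a i)),
          ∏ i, P (a i) :=
  core_set_mass_eps_general P hpos hsum
end

section
/- Let χ be a probability distribution on a finite set A and let 1/2 ≤ c < 1 be a constant. Then there exist constants C > 0, γ > 0 and N₀ ∈ ℕ such that for every n ≥ N₀, every m ≥ 1, and every set S ⊆ A^n of cardinality min(2^{⌈H(χ)·n + C·√n⌉}, |A|^n) consisting of most likely keys (i.e., P_n(x) ≥ P_n(y) for all x ∈ S and y ∉ S), the probability over m i.i.d. samples k_1, …, k_m ← χ^n that at least c·m of them lie in S is at least 1 − e^{−γ·m}. -/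
/-!
The self-information `-log₂ P_n(x) = ∑ᵢ -log₂ P(xᵢ)` of a key drawn from `χ^n` has mean `n·H` and
variance `n·V`, `V` the varentropy. By Chebyshev, all but mass `V/C²` of `χ^n` lies on keys with
`P_n(x) > 2^{-(nH + C√n)}`, and there are at most `2^{nH + C√n}` such keys, so a set of that many
most likely keys has mass at least `1 - V/C²`. Taking `C` with `V/C² ≤ q := (1-c)/2`, each sample
misses `S` with probability at most `q`, and the exponential-moment bound
`P(#misses > (1-c)m) ≤ (e^{-(1-c)}(1 + q(e-1)))^m` decays exponentially because
`1 + q(e-1) < 1 + (1-c) < e^{1-c}`.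
-/

open scoped Classical

open Finset Real

lemma sum_filter_le_sum_mul {α : Type*} (s : Finset α) (p : α → Prop) [DecidablePred p]
    {w f : α → ℝ} (hw : ∀ x ∈ s, 0 ≤ w x) (hf : ∀ x ∈ s, 0 ≤ f x) (hp : ∀ x ∈ s, p x → 1 ≤ f x) :
    ∑ x ∈ s with p x, w x ≤ ∑ x ∈ s, w x * f x :=
  calc ∑ x ∈ s with p x, w x ≤ ∑ x ∈ s with p x, w x * f x :=
        sum_le_sum fun x hx =>
          have hx := mem_filter.1 hx
          le_mul_of_one_le_right (hw x hx.1) (hp x hx.1 hx.2)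
    _ ≤ ∑ x ∈ s, w x * f x :=
        sum_le_sum_of_subset_of_nonneg (filter_subset _ _) fun x hx _ =>
          mul_nonneg (hw x hx) (hf x hx)

def IsMostLikely {B : Type*} (w : B → ℝ) (S : Finset B) : Prop :=
  ∀ x ∈ S, ∀ y ∉ S, w y ≤ w x

lemma IsMostLikely.sum_le_sum {B : Type*} {w : B → ℝ} {S T : Finset B}
    (hS : IsMostLikely w S) (hw : ∀ b, 0 ≤ w b) (hcard : T.card ≤ S.card) :
    ∑ y ∈ T, w y ≤ ∑ x ∈ S, w x := by
  rw [← sum_inter_add_sum_sdiff T S w, ← sum_inter_add_sum_sdiff S T w, inter_comm S T]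
  refine add_le_add le_rfl ?_
  have hsdiff : (T \ S).card ≤ (S \ T).card := by
    have := card_sdiff_add_card_inter T S
    have := card_sdiff_add_card_inter S T
    rw [inter_comm] at this
    omega
  rcases (S \ T).eq_empty_or_nonempty with hST | hST
  · rw [hST, card_empty, Nat.le_zero, card_eq_zero] at hsdiff
    simp [hST, hsdiff]
  obtain ⟨x₀, hx₀, hmin⟩ := exists_min_image (S \ T) w hST
  calc ∑ x ∈ T \ S, w x ≤ (T \ S).card • w x₀ :=
        sum_le_card_nsmul _ _ _ fun y hy =>
          hS x₀ (mem_sdiff.1 hx₀).1 y (mem_sdiff.1 hy).2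
    _ ≤ (S \ T).card • w x₀ := nsmul_le_nsmul_left (hw x₀) hsdiff
    _ ≤ ∑ x ∈ S \ T, w x := card_nsmul_le_sum _ _ _ hmin

section ProductWeights

variable {ι A : Type*} [Fintype ι] [DecidableEq ι] [Fintype A] {P : A → ℝ}

lemma sum_prod_mul_prod (f : ι → A → ℝ) :
    ∑ x : ι → A, (∏ i, P (x i)) * ∏ i, f i (x i) = ∏ i, ∑ a, P a * f i a := by
  simp_rw [← prod_mul_distrib]
  exact (Fintype.prod_sum fun i a => P a * f i a).symm

lemma sum_prod_eq_one (hsum : ∑ a, P a = 1) : ∑ x : ι → A, ∏ i, P (x i) = 1 := by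
  simpa [hsum] using sum_prod_mul_prod (P := P) fun (_ : ι) _ => (1 : ℝ)

lemma sum_prod_mul_apply_mul_apply (hsum : ∑ a, P a = 1) (g : A → ℝ) (i j : ι) :
    ∑ x : ι → A, (∏ k, P (x k)) * (g (x i) * g (x j)) =
      if i = j then ∑ a, P a * g a ^ 2 else (∑ a, P a * g a) ^ 2 := by
  have hfactor : ∀ x : ι → A, g (x i) * g (x j) =
      ∏ k, (if k = i then g (x k) else 1) * (if k = j then g (x k) else 1) := by
    intro x
    rw [prod_mul_distrib, prod_ite_eq' univ i, prod_ite_eq' univ j]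
    simp
  simp_rw [hfactor]
  rw [sum_prod_mul_prod fun k a => (if k = i then g a else 1) * (if k = j then g a else 1)]
  split_ifs with hij
  · subst hij
    have hfac : ∀ k, ∑ a, P a * ((if k = i then g a else 1) * (if k = i then g a else 1)) =
        if k = i then ∑ a, P a * g a ^ 2 else 1 := by
      intro k; split_ifs <;> simp [sq, hsum]
    rw [prod_congr rfl fun k _ => hfac k, prod_ite_eq' univ i, if_pos (mem_univ i)]
  · have hfac : ∀ k, ∑ a, P a * ((if k = i then g a else 1) * (if k = j then g a else 1)) =
        (if k = i then ∑ a, P a * g a else 1) * (if k = j then ∑ a, P a * g a else 1) := by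
      intro k; by_cases hki : k = i <;> by_cases hkj : k = j <;> simp_all
    rw [prod_congr rfl fun k _ => hfac k, prod_mul_distrib, prod_ite_eq' univ i,
      prod_ite_eq' univ j, if_pos (mem_univ i), if_pos (mem_univ j), sq]

lemma sum_prod_mul_sum_sq (hsum : ∑ a, P a = 1) {g : A → ℝ} (hmean : ∑ a, P a * g a = 0) :
    ∑ x : ι → A, (∏ i, P (x i)) * (∑ i, g (x i)) ^ 2 =
      Fintype.card ι * ∑ a, P a * g a ^ 2 := by
  calc ∑ x : ι → A, (∏ i, P (x i)) * (∑ i, g (x i)) ^ 2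
      = ∑ i, ∑ j, ∑ x : ι → A, (∏ k, P (x k)) * (g (x i) * g (x j)) := by
        simp_rw [sq, sum_mul_sum, mul_sum]
        rw [sum_comm]
        exact sum_congr rfl fun i _ => sum_comm
    _ = Fintype.card ι * ∑ a, P a * g a ^ 2 := by
        simp [sum_prod_mul_apply_mul_apply hsum, hmean]

end ProductWeights

section Entropy

variable {A : Type*} [Fintype A] (P : A → ℝ)

noncomputable def entropy : ℝ := -∑ a, P a * logb 2 (P a)

noncomputable def varentropy : ℝ := ∑ a, P a * (-logb 2 (P a) - entropy P) ^ 2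

variable {P} {ι : Type*} [Fintype ι]

lemma varentropy_nonneg (hpos : ∀ a, 0 < P a) : 0 ≤ varentropy P :=
  sum_nonneg fun a _ => mul_nonneg (hpos a).le (sq_nonneg _)

lemma neg_logb_prod_sub_entropy_mul_card (hpos : ∀ a, 0 < P a) (x : ι → A) :
    -logb 2 (∏ i, P (x i)) - entropy P * Fintype.card ι =
      ∑ i, (-logb 2 (P (x i)) - entropy P) := by
  rw [logb_prod _ _ fun i _ => (hpos (x i)).ne', sum_sub_distrib, sum_neg_distrib]
  simp [mul_comm]

variable (P ι) [DecidableEq ι]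

/-- One-sided typical set: only the lower bound on the probability of its members matters. -/
noncomputable def typicalSet (r : ℝ) : Finset (ι → A) :=
  {x | -logb 2 (∏ i, P (x i)) < entropy P * Fintype.card ι + r}

variable {P ι}

lemma card_typicalSet_le (hpos : ∀ a, 0 < P a) (hsum : ∑ a, P a = 1) (r : ℝ) :
    ((typicalSet P ι r).card : ℝ) ≤ 2 ^ (entropy P * Fintype.card ι + r) := by
  set t := entropy P * Fintype.card ι + r
  have hlower : ∀ x ∈ typicalSet P ι r, (2 : ℝ) ^ (-t) ≤ ∏ i, P (x i) := by
    intro x hx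
    have hx : -t < logb 2 (∏ i, P (x i)) := by
      have := (mem_filter.1 hx).2; linarith
    calc (2 : ℝ) ^ (-t) ≤ 2 ^ logb 2 (∏ i, P (x i)) :=
          rpow_le_rpow_of_exponent_le one_le_two hx.le
      _ = ∏ i, P (x i) := rpow_logb two_pos (by norm_num) (prod_pos fun i _ => hpos (x i))
  have hmass : (typicalSet P ι r).card * (2 : ℝ) ^ (-t) ≤ 1 :=
    calc (typicalSet P ι r).card * (2 : ℝ) ^ (-t) ≤ ∑ x ∈ typicalSet P ι r, ∏ i, P (x i) := by
          simpa using card_nsmul_le_sum _ _ _ hlower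
      _ ≤ ∑ x : ι → A, ∏ i, P (x i) :=
          sum_le_sum_of_subset_of_nonneg (subset_univ _) fun x _ _ =>
            prod_nonneg fun i _ => (hpos (x i)).le
      _ = 1 := sum_prod_eq_one hsum
  rwa [rpow_neg zero_le_two, ← div_eq_mul_inv, div_le_one (by positivity)] at hmass

lemma sum_compl_typicalSet_le (hpos : ∀ a, 0 < P a) (hsum : ∑ a, P a = 1) {r : ℝ} (hr : 0 < r) :
    ∑ x ∈ (typicalSet P ι r)ᶜ, ∏ i, P (x i) ≤ Fintype.card ι * varentropy P / r ^ 2 := by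
  set D : (ι → A) → ℝ := fun x => ∑ i, (-logb 2 (P (x i)) - entropy P)
  have hmean : ∑ a, P a * (-logb 2 (P a) - entropy P) = 0 := by
    simp only [mul_sub, sum_sub_distrib, ← sum_mul, hsum, one_mul, entropy, mul_neg,
      sum_neg_distrib, sub_self]
  rw [typicalSet, compl_filter]
  calc _ ≤ ∑ x : ι → A, (∏ i, P (x i)) * (D x / r) ^ 2 := by
        refine sum_filter_le_sum_mul _ _ (fun x _ => ?_) (fun x _ => sq_nonneg _) fun x _ hx => ?_
        · exact prod_nonneg fun i _ => (hpos (x i)).le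
        have : r ≤ D x := by
          simp only [D, ← neg_logb_prod_sub_entropy_mul_card hpos]; linarith
        exact one_le_pow₀ ((one_le_div hr).2 this)
    _ = Fintype.card ι * varentropy P / r ^ 2 := by
        simp_rw [div_pow, mul_div_assoc', ← sum_div]
        rw [sum_prod_mul_sum_sq hsum hmean]
        rfl

lemma IsMostLikely.one_sub_varentropy_div_sq_le_sum [Nonempty ι] {S : Finset (ι → A)}
    (hS : IsMostLikely (fun x => ∏ i, P (x i)) S) (hpos : ∀ a, 0 < P a) (hsum : ∑ a, P a = 1)
    {C : ℝ} (hC : 0 < C)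
    (hcard : min (2 ^ ⌈entropy P * Fintype.card ι + C * √(Fintype.card ι)⌉₊)
      (Fintype.card A ^ Fintype.card ι) ≤ S.card) :
    1 - varentropy P / C ^ 2 ≤ ∑ x ∈ S, ∏ i, P (x i) := by
  set r := C * √(Fintype.card ι)
  have hn : (0 : ℝ) < Fintype.card ι := Nat.cast_pos.2 Fintype.card_pos
  have hr : 0 < r := by positivity
  set T := typicalSet P ι r
  have hTcard : T.card ≤ S.card := by
    have hpow : T.card ≤ 2 ^ ⌈entropy P * Fintype.card ι + r⌉₊ := by
      have := (card_typicalSet_le (ι := ι) hpos hsum r).trans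
        (rpow_le_rpow_of_exponent_le one_le_two (Nat.le_ceil _))
      exact_mod_cast this
    have huniv : T.card ≤ Fintype.card A ^ Fintype.card ι := by
      simpa using card_le_univ T
    exact (le_min hpow huniv).trans hcard
  have hratio : varentropy P / C ^ 2 = Fintype.card ι * varentropy P / r ^ 2 := by
    rw [mul_pow, sq_sqrt hn.le]
    field_simp
  calc 1 - varentropy P / C ^ 2 ≤ ∑ x ∈ T, ∏ i, P (x i) := by
        have := sum_add_sum_compl T fun x => ∏ i, P (x i)
        rw [sum_prod_eq_one hsum] at this
        linarith [hratio, sum_compl_typicalSet_le (P := P) (ι := ι) hpos hsum hr]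
    _ ≤ ∑ x ∈ S, ∏ i, P (x i) :=
        hS.sum_le_sum (fun x => prod_nonneg fun i _ => (hpos (x i)).le) hTcard

end Entropy

lemma sum_prod_filter_card_mem_lt_le {B : Type*} [Fintype B] [DecidableEq B] {w : B → ℝ}
    (hw : ∀ b, 0 ≤ w b) (htot : ∑ b, w b = 1) {S : Finset B} {q : ℝ}
    (hmass : 1 - q ≤ ∑ b ∈ S, w b) (c : ℝ) (m : ℕ) :
    ∑ k : Fin m → B with ¬c * m ≤ ((univ.filter fun j => k j ∈ S).card : ℝ), ∏ j, w (k j) ≤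
      (exp (-(1 - c)) * (1 + q * (exp 1 - 1))) ^ m := by
  set g : B → ℝ := fun b => exp ((if b ∈ S then 0 else 1) - (1 - c))
  have hprod : ∀ k : Fin m → B,
      ∏ j, g (k j) = exp (m - (univ.filter fun j => k j ∈ S).card - m * (1 - c)) := by
    intro k
    rw [← exp_sum, sum_sub_distrib, sum_const, card_univ, Fintype.card_fin, nsmul_eq_mul]
    have hmiss : ∑ j, (if k j ∈ S then (0 : ℝ) else 1) =
        m - (univ.filter fun j => k j ∈ S).card := by
      have hsplit : ∀ j, (if k j ∈ S then (0 : ℝ) else 1) = 1 - if k j ∈ S then 1 else 0 :=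
        fun j => by split_ifs <;> norm_num
      simp only [hsplit, sum_sub_distrib, sum_boole, sum_const, card_univ, Fintype.card_fin,
        nsmul_eq_mul, mul_one]
    rw [hmiss]
  have hterm : ∀ b, w b * g b =
      exp (-(1 - c)) * (exp 1 * w b - (exp 1 - 1) * if b ∈ S then w b else 0) := by
    intro b
    by_cases hb : b ∈ S
    · simp only [g, hb, if_true, zero_sub]
      ring
    · have hexp : exp (1 - (1 - c)) = exp 1 * exp (-(1 - c)) := by rw [← exp_add]; ring_nf
      simp only [g, hb, if_false, hexp]
      ring
  have hmean : ∑ b, w b * g b ≤ exp (-(1 - c)) * (1 + q * (exp 1 - 1)) := by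
    simp only [hterm, ← mul_sum, sum_sub_distrib, sum_ite_mem, univ_inter, htot]
    gcongr
    nlinarith [add_one_lt_exp one_ne_zero]
  calc ∑ k : Fin m → B with ¬c * m ≤ ((univ.filter fun j => k j ∈ S).card : ℝ), ∏ j, w (k j)
      ≤ ∑ k : Fin m → B, (∏ j, w (k j)) * ∏ j, g (k j) := by
        refine sum_filter_le_sum_mul _ _ (fun k _ => prod_nonneg fun j _ => hw _)
          (fun k _ => prod_nonneg fun j _ => (exp_pos _).le) fun k _ hk => ?_
        rw [hprod]
        exact one_le_exp (by linarith [not_le.1 hk])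
    _ = (∑ b, w b * g b) ^ m := by
        rw [sum_prod_mul_prod (P := w) fun _ => g, prod_const, card_univ, Fintype.card_fin]
    _ ≤ (exp (-(1 - c)) * (1 + q * (exp 1 - 1))) ^ m :=
        pow_le_pow_left₀ (sum_nonneg fun b _ => mul_nonneg (hw b) (exp_pos _).le) hmean m

lemma exp_neg_mul_one_add_half_mul_lt_one {β : ℝ} (hβ : 0 < β) :
    exp (-β) * (1 + β / 2 * (exp 1 - 1)) < 1 := by
  have he : exp 1 < 3 := lt_trans exp_one_lt_d9 (by norm_num)
  calc exp (-β) * (1 + β / 2 * (exp 1 - 1)) < exp (-β) * exp β := by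
        gcongr
        have : β / 2 * (exp 1 - 1) < β := by nlinarith
        linarith [add_one_lt_exp hβ.ne']
    _ = 1 := by rw [← exp_add, neg_add_cancel, exp_zero]

theorem multikey_guessing_large_fraction_general {A : Type*} [Fintype A]
    (P : A → ℝ) (hpos : ∀ a, 0 < P a)
    (hsum : ∑ a, P a = 1)
    (c : ℝ) (hc : c < 1) :
    ∃ C > (0 : ℝ), ∃ γ > (0 : ℝ), ∃ N₀ : ℕ, ∀ n ≥ N₀, ∀ m : ℕ, 1 ≤ m →
      ∀ S : Finset (Fin n → A),
        S.card =
          min (2 ^ ⌈(-∑ x, P x * Real.logb 2 (P x)) * n + C * Real.sqrt n⌉₊)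
            (Fintype.card A ^ n) →
        (∀ x ∈ S, ∀ y ∉ S, (∏ i, P (y i)) ≤ ∏ i, P (x i)) →
        1 - Real.exp (-γ * m) ≤
          ∑ k ∈ Finset.univ.filter (fun k : Fin m → Fin n → A =>
              c * m ≤ ((Finset.univ.filter (fun j => k j ∈ S)).card : ℝ)),
            ∏ j, ∏ i, P (k j i) := by
  set q := (1 - c) / 2
  have hq : 0 < q := half_pos (sub_pos.2 hc)
  set ρ := exp (-(1 - c)) * (1 + q * (exp 1 - 1))
  have hρ : 0 < ρ := mul_pos (exp_pos _) (by nlinarith [add_one_lt_exp one_ne_zero])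
  have hρ1 : ρ < 1 := exp_neg_mul_one_add_half_mul_lt_one (sub_pos.2 hc)
  set C := varentropy P / q + 1
  have hC : 1 ≤ C := le_add_of_nonneg_left (div_nonneg (varentropy_nonneg hpos) hq.le)
  have hCq : varentropy P / C ^ 2 ≤ q := by
    rw [div_le_iff₀ (by positivity)]
    calc varentropy P ≤ q * C := by simp only [C]; field_simp; linarith
      _ ≤ q * C ^ 2 := by gcongr; nlinarith
  refine ⟨C, by positivity, -log ρ, neg_pos.2 (log_neg hρ hρ1), 1, fun n hn m _ S hcard hS => ?_⟩
  have : Nonempty (Fin n) := ⟨⟨0, hn⟩⟩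
  have hmass : 1 - q ≤ ∑ x ∈ S, ∏ i, P (x i) :=
    (sub_le_sub_left hCq 1).trans <| IsMostLikely.one_sub_varentropy_div_sq_le_sum hS hpos hsum
      (by positivity) (by rw [Fintype.card_fin, hcard]; exact le_rfl)
  have hfew : _ ≤ ρ ^ m := sum_prod_filter_card_mem_lt_le
    (fun x => prod_nonneg fun i _ => (hpos (x i)).le) (sum_prod_eq_one hsum) hmass c m
  have htot := sum_filter_add_sum_filter_not univ
    (fun k : Fin m → Fin n → A => c * m ≤ ((univ.filter fun j => k j ∈ S).card : ℝ))
    (fun k => ∏ j, ∏ i, P (k j i))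
  rw [sum_prod_eq_one (sum_prod_eq_one hsum)] at htot
  rw [neg_neg, mul_comm, exp_nat_mul, exp_log hρ]
  exact (sub_le_sub_left hfew 1).trans (eq_sub_of_add_eq htot).ge

/-- **Multi-key guessing, fraction `1/2 ≤ c < 1`.** Let `χ` be a distribution on a
finite set `A` with pmf `P` and Shannon entropy `H(χ) = −∑ a, P a · log₂ (P a)`, and
let `1/2 ≤ c < 1`. Then there are constants `C > 0`, `γ > 0` and `N₀` such that for
all `n ≥ N₀`, all `m ≥ 1`, and every set `S ⊆ A^n` of cardinality
`min(2^⌈H(χ)·n + C·√n⌉, |A|^n)` consisting of most likely keys (i.e. `P_n x ≥ P_n y`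
for `x ∈ S`, `y ∉ S`), the probability over `m` i.i.d. samples from `χ^n` that at
least `c·m` of them lie in `S` is at least `1 − e^{−γ·m}`. -/
theorem multikey_guessing_large_fraction {A : Type*} [Fintype A]
    (P : A → ℝ) (hpos : ∀ a, 0 < P a) (hle : ∀ a, P a ≤ 1)
    (hsum : ∑ a, P a = 1)
    (c : ℝ) (hc0 : 1 / 2 ≤ c) (hc : c < 1) :
    ∃ C > (0 : ℝ), ∃ γ > (0 : ℝ), ∃ N₀ : ℕ, ∀ n ≥ N₀, ∀ m : ℕ, 1 ≤ m →
      ∀ S : Finset (Fin n → A),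
        S.card =
          min (2 ^ ⌈(-∑ x, P x * Real.logb 2 (P x)) * n + C * Real.sqrt n⌉₊)
            (Fintype.card A ^ n) →
        (∀ x ∈ S, ∀ y ∉ S, (∏ i, P (y i)) ≤ ∏ i, P (x i)) →
        1 - Real.exp (-γ * m) ≤
          ∑ k ∈ Finset.univ.filter (fun k : Fin m → Fin n → A =>
              c * m ≤ ((Finset.univ.filter (fun j => k j ∈ S)).card : ℝ)),
            ∏ j, ∏ i, P (k j i) :=
  multikey_guessing_large_fraction_general P hpos hsum c hc
end

section
/- For every p with 0 < p ≤ 1/2, the Rényi entropy of the Bernoulli distribution satisfies H_{1/2}(Ber(p)) = 2·log₂(√p + √(1−p)) ≥ (1/2)·log₂(e)·√p. -/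
/-!
Write `a = √p` and `b = √(1 - p)`, so that `a² + b² = 1`, `a ≤ b` and `(a + b)² = 1 + 2ab`.
Then `2 ln (a + b) = ln (1 + 2ab) ≥ ab`, because `ln (1 + x) ≥ x / 2` on `[0, 2]`, and
`ab ≥ a / 2` because `b² ≥ 1/2`. Dividing by `ln 2` turns `ln` into `log₂` and `1/2` into `log₂ e / 2`.
-/

open Real

lemma Real.half_le_log_one_add {x : ℝ} (h0 : 0 ≤ x) (h2 : x ≤ 2) : x / 2 ≤ log (1 + x) :=
  calc x / 2 ≤ 2 * x / (x + 2) := by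
        rw [le_div_iff₀ (by linarith)]
        nlinarith
    _ ≤ log (1 + x) := le_log_one_add_of_nonneg h0

lemma Real.half_le_two_mul_log_add {a b : ℝ} (ha : 0 ≤ a) (hab : a ≤ b) (h : a ^ 2 + b ^ 2 = 1) :
    a / 2 ≤ 2 * log (a + b) := by
  have hb : 1 ≤ 2 * b := by nlinarith
  have hsq : (a + b) ^ 2 = 1 + 2 * a * b := by linear_combination h
  have hlog : 2 * log (a + b) = log (1 + 2 * a * b) := by
    rw [← hsq, log_pow]
    push_cast
    ring
  rw [hlog]
  calc a / 2 ≤ 2 * a * b / 2 := by nlinarith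
    _ ≤ log (1 + 2 * a * b) :=
        half_le_log_one_add (by nlinarith) (by nlinarith [sq_nonneg (a - b)])

/-- **Lower bound on `H_{1/2}` of a Bernoulli distribution.** For `0 < p ≤ 1/2`, the
Rényi entropy `H_{1/2}(Ber(p)) = (1/(1−1/2))·log₂(p^{1/2} + (1−p)^{1/2})` equals
`2·log₂(√p + √(1−p))` and is at least `(1/2)·log₂(e)·√p`. -/
theorem bernoulli_renyi_half (p : ℝ) (hp : 0 < p) (hp' : p ≤ 1 / 2) :
    (1 / (1 - (1 : ℝ) / 2)) * Real.logb 2 (p ^ ((1 : ℝ) / 2) + (1 - p) ^ ((1 : ℝ) / 2)) =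
      2 * Real.logb 2 (Real.sqrt p + Real.sqrt (1 - p)) ∧
    (1 / 2) * Real.logb 2 (Real.exp 1) * Real.sqrt p ≤
      2 * Real.logb 2 (Real.sqrt p + Real.sqrt (1 - p)) := by
  refine ⟨by rw [← sqrt_eq_rpow, ← sqrt_eq_rpow]; norm_num, ?_⟩
  have hsqrt_le : √p ≤ √(1 - p) := sqrt_le_sqrt (by linarith)
  have hsum : √p ^ 2 + √(1 - p) ^ 2 = 1 := by
    rw [sq_sqrt hp.le, sq_sqrt (by linarith)]
    ring
  have key := half_le_two_mul_log_add (sqrt_nonneg p) hsqrt_le hsum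
  have hlog2 : 0 < log 2 := log_pos one_lt_two
  calc 1 / 2 * logb 2 (exp 1) * √p = √p / 2 / log 2 := by
        rw [logb, log_exp]
        ring
    _ ≤ 2 * log (√p + √(1 - p)) / log 2 := by gcongr
    _ = 2 * logb 2 (√p + √(1 - p)) := by
        rw [logb]
        ring
end

section
/- For every p with 0 < p ≤ 1/2, it holds that 2 · H_{1/2}(Ber(p)) / H_{2/3}(Ber(p)) ≥ (1/3) · p^{−1/6}; that is, the asymptotic quantum speed-up of Montanaro's key-guessing algorithm over classical key guessing for keys drawn from Ber(p)^n is at least (1/3)·p^{−1/6}. -/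
/-- **Small-noise LPN quantum speed-up.** For `0 < p ≤ 1/2`, with
`H_{1/2}(Ber(p)) = 2·log₂(p^{1/2} + (1−p)^{1/2})` and
`H_{2/3}(Ber(p)) = 3·log₂(p^{2/3} + (1−p)^{2/3})`, the asymptotic quantum speed-up of
Montanaro's key-guessing algorithm over classical key guessing on keys from
`Ber(p)^n`, namely `2·H_{1/2}(Ber(p)) / H_{2/3}(Ber(p))`, is at least
`(1/3)·p^{−1/6}`. -/
theorem bernoulli_speedup (p : ℝ) (hp : 0 < p) (hp' : p ≤ 1 / 2) :
    (1 / 3) * p ^ (-(1 : ℝ) / 6) ≤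
      2 * (2 * Real.logb 2 (p ^ ((1 : ℝ) / 2) + (1 - p) ^ ((1 : ℝ) / 2))) /
        (3 * Real.logb 2 (p ^ ((2 : ℝ) / 3) + (1 - p) ^ ((2 : ℝ) / 3))) := by
  have hp1 : p < 1 := lt_of_le_of_lt hp' (by norm_num)
  have h1p : (0:ℝ) < 1 - p := by linarith
  set s := p ^ ((1:ℝ)/2) + (1 - p) ^ ((1:ℝ)/2) with hs
  set t := p ^ ((2:ℝ)/3) + (1 - p) ^ ((2:ℝ)/3) with ht
  have hln2 : (0:ℝ) < Real.log 2 := Real.log_pos (by norm_num)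
  -- rewrite rpow 1/2 as sqrt
  have hsq : s = Real.sqrt p + Real.sqrt (1 - p) := by
    rw [hs, Real.sqrt_eq_rpow, Real.sqrt_eq_rpow]
  set u := Real.sqrt (p * (1 - p)) with hu
  have hu0 : 0 ≤ u := Real.sqrt_nonneg _
  have hu2 : u ^ 2 = p * (1 - p) := Real.sq_sqrt (by nlinarith)
  have huhalf : u ≤ 1/2 := by
    nlinarith [hu2, hu0]
  -- s^2 = 1 + 2u
  have hss : s ^ 2 = 1 + 2 * u := by
    rw [hsq]
    have h1 : Real.sqrt p ^ 2 = p := Real.sq_sqrt hp.le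
    have h2 : Real.sqrt (1-p) ^ 2 = 1 - p := Real.sq_sqrt h1p.le
    have h3 : Real.sqrt p * Real.sqrt (1-p) = u := (Real.sqrt_mul hp.le _).symm
    nlinarith [h1, h2, h3]
  have hspos : 0 < s := by
    rw [hsq]; positivity
  -- lower bound : 2 * log s ≥ u
  have hlogs : u ≤ 2 * Real.log s := by
    have h1 : Real.log (s ^ 2) = 2 * Real.log s := by
      rw [Real.log_pow]; push_cast; ring
    have h2 : Real.log ((1 + 2*u)⁻¹) ≤ (1 + 2*u)⁻¹ - 1 :=
      Real.log_le_sub_one_of_pos (by positivity)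
    rw [Real.log_inv] at h2
    have h3 : 1 - (1 + 2*u)⁻¹ ≤ Real.log (1 + 2*u) := by linarith
    have hpos : (0:ℝ) < 1 + 2*u := by linarith
    have hinv : (1 + 2*u)⁻¹ * (1 + 2*u) = 1 := inv_mul_cancel₀ hpos.ne'
    have hinv0 : 0 ≤ (1 + 2*u)⁻¹ := inv_nonneg.mpr hpos.le
    have h4 : u ≤ 1 - (1 + 2*u)⁻¹ := by nlinarith [hinv, hinv0, huhalf, hu0]
    rw [← hss] at h3 h4
    linarith [h1]
  -- upper bound : log t ≤ p^(2/3)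
  have htub : Real.log t ≤ p ^ ((2:ℝ)/3) := by
    have h1 : (1 - p) ^ ((2:ℝ)/3) ≤ 1 :=
      Real.rpow_le_one h1p.le (by linarith) (by norm_num)
    have h2 : Real.log t ≤ t - 1 := Real.log_le_sub_one_of_pos (by rw [ht]; positivity)
    rw [ht] at h2 ⊢
    linarith
  -- t > 1
  have htgt : 1 < t := by
    have h1 : p ^ (1:ℝ) < p ^ ((2:ℝ)/3) :=
      Real.rpow_lt_rpow_of_exponent_gt hp hp1 (by norm_num)
    have h2 : (1-p) ^ (1:ℝ) < (1-p) ^ ((2:ℝ)/3) :=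
      Real.rpow_lt_rpow_of_exponent_gt h1p (by linarith) (by norm_num)
    rw [Real.rpow_one] at h1 h2
    rw [ht]; linarith
  have hlogt : 0 < Real.log t := Real.log_pos htgt
  have hBpos : 0 < Real.logb 2 t := Real.logb_pos (by norm_num) htgt
  -- key inequality
  have key : p ^ (-(1:ℝ)/6) * Real.log t ≤ 4 * Real.log s := by
    have h1 : p ^ (-(1:ℝ)/6) * Real.log t ≤ p ^ (-(1:ℝ)/6) * p ^ ((2:ℝ)/3) :=
      mul_le_mul_of_nonneg_left htub (Real.rpow_nonneg hp.le _)
    have h2 : p ^ (-(1:ℝ)/6) * p ^ ((2:ℝ)/3) = p ^ ((1:ℝ)/2) := by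
      rw [← Real.rpow_add hp]; norm_num
    have h3 : p ^ ((1:ℝ)/2) ≤ 2 * u := by
      rw [← Real.sqrt_eq_rpow, hu]
      have : p ≤ 4 * (p * (1-p)) := by nlinarith
      calc Real.sqrt p ≤ Real.sqrt (4 * (p * (1-p))) := Real.sqrt_le_sqrt this
        _ = 2 * u := by
            rw [Real.sqrt_mul (by norm_num), show Real.sqrt 4 = 2 by
              rw [show (4:ℝ) = 2^2 by norm_num, Real.sqrt_sq (by norm_num)]]
    linarith
  -- conclude
  have k2 : p ^ (-(1:ℝ)/6) * Real.log t / Real.log 2 ≤ 4 * Real.log s / Real.log 2 :=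
    div_le_div_of_nonneg_right key hln2.le
  have hBpos' : (0:ℝ) < 3 * Real.logb 2 t := by positivity
  rw [le_div_iff₀ hBpos']
  have e1 : 2 * (2 * Real.logb 2 s) = 4 * Real.log s / Real.log 2 := by
    rw [Real.logb]; ring
  have e2 : 1 / 3 * p ^ (-(1:ℝ) / 6) * (3 * Real.logb 2 t)
      = p ^ (-(1:ℝ) / 6) * Real.log t / Real.log 2 := by
    rw [Real.logb]; ring
  rw [e1, e2]
  exact k2
end
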